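/- arXiv:1902.10325 — 5 statements merged into one kernel-verified Lean document; each statement's English description precedes it below -/
import Mathlib

section
/- Let g : ℝ^d → ℝ ∪ {+∞} be proper, lower semicontinuous and prox-bounded with threshold λ_g > 0, let (Ξ, 𝒜, ℙ) be a complete probability space with countable product (Ξ^∞, 𝒜^∞, ℙ^∞), let φ : Ξ × ℝ^d → ℝ ∪ {±∞} be a normal integrand, and let C ⊆ ℝ^d be a bounded closed set. Consider the robust problem: minimize g(x) subject to x ∈ C and φ(ξ, x) ≤ 0 for ℙ-a.e. ξ, and assume it is feasible (there exists x ∈ C with g(x) < +∞ and φ(ξ, x) ≤ 0 for ℙ-a.e. ξ). Let λ_n ∈ (0, λ_g) with λ_n ↓ 0, and for ω = (ξ_k)_{k≥1} ∈ Ξ^∞ let x_n(ω) be a measurable selection of minimizers of the problem: minimize e_{λ_n}g(x) subject to x ∈ C and φ(ξ_i, x) ≤ 0 for i = 1, …, n. Then for ℙ^∞-a.e. ω ∈ Ξ^∞: (a) e_{λ_n}g(x_n(ω)) converges to the optimal value of the robust problem, and (b) every cluster point of the sequence (x_n(ω))_{n∈ℕ} is a minimizer of the robust problem. -/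
open Filter Topology MeasureTheory Set

noncomputable section

/-- Epi-convergence of a sequence of extended-real-valued functions on a metric space:
for every `x`, (a) `liminf f n (u n) ≥ g x` along every sequence `u → x`, and
(b) `limsup f n (u n) ≤ g x` along some sequence `u → x`. -/
def EpiConv {X : Type*} [MetricSpace X] (f : ℕ → X → EReal) (g : X → EReal) : Prop :=
  ∀ x : X,
    (∀ u : ℕ → X, Tendsto u atTop (𝓝 x) → g x ≤ atTop.liminf fun n => f n (u n)) ∧
    (∃ u : ℕ → X, Tendsto u atTop (𝓝 x) ∧ (atTop.limsup fun n => f n (u n)) ≤ g x)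

/-- Continuous convergence: `f n (u n) → g x` for every `x` and every sequence `u → x`. -/
def ContConv {X : Type*} [MetricSpace X] (f : ℕ → X → EReal) (g : X → EReal) : Prop :=
  ∀ x : X, ∀ u : ℕ → X, Tendsto u atTop (𝓝 x) →
    Tendsto (fun n => f n (u n)) atTop (𝓝 (g x))

/-- Infimal value of `h` on `C`. -/
def vOn {X : Type*} (h : X → EReal) (C : Set X) : EReal := ⨅ x ∈ C, h x

open Classical in
/-- ε-infimal value of `h` on `C`: `inf_C h + ε` if `inf_C h > -∞`, and `-1/ε` otherwise
(with the convention `1/0 = +∞`, so `-1/0 = -∞`). -/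
def vEpsOn {X : Type*} (h : X → EReal) (C : Set X) (ε : ℝ) : EReal :=
  if vOn h C = ⊥ then (if ε = 0 then ⊥ else ((-ε⁻¹ : ℝ) : EReal))
  else vOn h C + (ε : EReal)

/-- ε-argmin of `h` on `C`: the points of `C` where `h` is below the ε-infimal value. -/
def argminOn {X : Type*} (h : X → EReal) (C : Set X) (ε : ℝ) : Set X :=
  {x ∈ C | h x ≤ vEpsOn h C ε}

/-- Painlevé–Kuratowski outer limit: points whose distance to `S n` has liminf 0. -/
def outerLim {X : Type*} [MetricSpace X] (S : ℕ → Set X) : Set X :=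
  {x | atTop.liminf (fun n => EMetric.infEdist x (S n)) = 0}

/-- Painlevé–Kuratowski inner limit: points whose distance to `S n` has limsup 0. -/
def innerLim {X : Type*} [MetricSpace X] (S : ℕ → Set X) : Set X :=
  {x | atTop.limsup (fun n => EMetric.infEdist x (S n)) = 0}

open Classical in
/-- Indicator function `δ_A`: `0` on `A`, `+∞` off `A`. -/
def delta {X : Type*} (A : Set X) : X → EReal := fun x => if x ∈ A then 0 else ⊤

/-- The sequence `g n` is eventually level-compact on the sets `C n`: for every level `α`
there is `N` such that the union over `n ≥ N` of the `α`-sublevel sets of `g n` on `C n`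
is relatively compact. -/
def EvLevelCompact {X : Type*} [MetricSpace X] (g : ℕ → X → EReal) (C : ℕ → Set X) : Prop :=
  ∀ α : ℝ, ∃ N : ℕ, IsCompact (closure (⋃ n ∈ Ici N, {x ∈ C n | g n x ≤ (α : EReal)}))

/-- Measurability of a set-valued map: preimages of open sets are measurable. -/
def MeasurableMultifun {Ξ X : Type*} [MeasurableSpace Ξ] [TopologicalSpace X]
    (M : Ξ → Set X) : Prop :=
  ∀ U : Set X, IsOpen U → MeasurableSet {ξ | (M ξ ∩ U).Nonempty}

/-- `P` is the countable product `ℙ^∞` of the probability measure `ℙ`: every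
finite-dimensional cylinder has product measure. -/
def IsProductMeasure {Ξ : Type*} [MeasurableSpace Ξ] (P : Measure (ℕ → Ξ))
    (ℙ : Measure Ξ) : Prop :=
  ∀ (s : Finset ℕ) (A : ℕ → Set Ξ), (∀ i, MeasurableSet (A i)) →
    P {ω | ∀ i ∈ s, ω i ∈ A i} = ∏ i ∈ s, ℙ (A i)

/-- Moreau envelope `e_λ g`. -/
def moreau {d : ℕ} (g : EuclideanSpace ℝ (Fin d) → EReal) (lam : ℝ)
    (x : EuclideanSpace ℝ (Fin d)) : EReal :=
  ⨅ u, g u + ((‖x - u‖ ^ 2 / (2 * lam) : ℝ) : EReal)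

/-!
The only probabilistic ingredient is that, almost surely, a point satisfying all the sampled
constraints `φ (ω i) z ≤ 0` satisfies `φ ξ z ≤ 0` for `ℙ`-a.e. `ξ`. For one point this is
Borel–Cantelli for i.i.d. samples; to get it for all points simultaneously it suffices to test the
countably many events "the basic open set `U` misses the level set `{φ ξ ≤ 0}`". Their
measurability is the measurable projection theorem, which is where completeness of `ℙ` enters,
through Choquet's capacitability of analytic sets.

Given this, cluster points of the scenario minimizers are robust-feasible, and the rest is
deterministic. Since `e_λ g ≤ g`, the scenario values are bounded by the robust value (tested on
countably many feasible points realising the infimum). Conversely, `e_λ g` epi-converges to `g`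
as `λ ↓ 0` (lower semicontinuity near a point, prox-boundedness far from it), which together with
compactness of `C` gives the matching lower bound and the optimality of cluster points.
-/

lemma isCompact_setOf_forall_le (b : ℕ → ℕ) : IsCompact {x : ℕ → ℕ | ∀ i, x i ≤ b i} := by
  convert isCompact_univ_pi fun i => (finite_Iic (b i)).isCompact
  ext x
  simp [Pi.le_def]

lemma exists_forall_lt_subset_of_isOpen {b : ℕ → ℕ} {V : Set (ℕ → ℕ)} (hV : IsOpen V)
    (hbV : {x | ∀ i, x i ≤ b i} ⊆ V) : ∃ n, {x : ℕ → ℕ | ∀ i < n, x i ≤ b i} ⊆ V := by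
  by_contra! h
  choose x hxb hxV using fun n => not_subset.1 (h n)
  -- Truncating `x n` at `b` changes no coordinate below `n`.
  set y : ℕ → ℕ → ℕ := fun n i => min (x n i) (b i)
  obtain ⟨l, hl, ψ, hψ, hyl⟩ :=
    (isCompact_setOf_forall_le b).tendsto_subseq (x := y) fun n i => min_le_right _ _
  have hxl : Tendsto (fun k => x (ψ k)) atTop (𝓝 l) := by
    refine tendsto_pi_nhds.2 fun i => ((continuous_apply i).tendsto l).comp hyl |>.congr' ?_
    filter_upwards [eventually_gt_atTop i] with k hk
    exact min_eq_left (hxb (ψ k) i (hk.trans_le hψ.le_apply))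
  obtain ⟨k, hk⟩ := (hxl.eventually (hV.mem_nhds (hbV hl))).exists
  exact hxV (ψ k) hk

namespace MeasureTheory

section Capacitability

variable {X : Type*} [TopologicalSpace X] [TopologicalSpace.PseudoMetrizableSpace X]
  [MeasurableSpace X] [BorelSpace X] {μ : Measure X} [IsFiniteMeasure μ]

theorem AnalyticSet.exists_isCompact_subset_le_measure {A : Set X} (hA : AnalyticSet A)
    {r : ENNReal} (hr : r < μ A) : ∃ K ⊆ A, IsCompact K ∧ r ≤ μ K := by
  rw [AnalyticSet] at hA
  rcases hA with rfl | ⟨f, hf, rfl⟩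
  · simp at hr
  have step (s : Set (ℕ → ℕ)) (n : ℕ) :
      ∃ m, r < μ (f '' s) → r < μ (f '' (s ∩ {x | x n ≤ m})) := by
    by_cases hs : r < μ (f '' s)
    · have hmono : Monotone fun m => f '' (s ∩ {x | x n ≤ m}) := fun a b hab =>
        image_mono (inter_subset_inter_right _ fun x hx => le_trans hx hab)
      have hU : ⋃ m, f '' (s ∩ {x | x n ≤ m}) = f '' s := by
        rw [← image_iUnion, ← inter_iUnion,
          iUnion_eq_univ_iff.2 fun x => ⟨x n, le_refl (x n)⟩, inter_univ]
      rw [← hU, hmono.measure_iUnion, lt_iSup_iff] at hs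
      obtain ⟨m, hm⟩ := hs
      exact ⟨m, fun _ => hm⟩
    · exact ⟨0, fun h => absurd h hs⟩
  choose N hN using step
  -- Choquet's construction: bound one more coordinate at each stage, keeping the measure
  -- above `r`.
  let S : ℕ → Set (ℕ → ℕ) := fun n => Nat.rec univ (fun k s => s ∩ {x | x k ≤ N s k}) n
  let b : ℕ → ℕ := fun k => N (S k) k
  have hS_lt (n : ℕ) : r < μ (f '' S n) := by
    induction n with
    | zero => simpa [S] using hr
    | succ n ih => exact hN (S n) n ih
  have hS_eq (n : ℕ) : S n = {x | ∀ i < n, x i ≤ b i} := by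
    induction n with
    | zero => simp [S]
    | succ n ih =>
      change S n ∩ {x | x n ≤ b n} = _
      ext x
      simp [ih, le_iff_lt_or_eq, or_imp, forall_and]
  refine ⟨f '' {x | ∀ i, x i ≤ b i}, image_subset_range _ _,
    (isCompact_setOf_forall_le b).image hf, ?_⟩
  by_contra! hlt
  obtain ⟨U, hKU, hU, hUr⟩ := exists_isOpen_lt_of_lt _ r hlt
  obtain ⟨n, hn⟩ := exists_forall_lt_subset_of_isOpen (hU.preimage hf) (image_subset_iff.1 hKU)
  rw [← hS_eq] at hn
  exact (hS_lt n).not_ge ((measure_mono (image_subset_iff.2 hn)).trans hUr.le)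

theorem AnalyticSet.nullMeasurableSet [T2Space X] {A : Set X} (hA : AnalyticSet A) :
    NullMeasurableSet A μ := by
  rcases eq_or_ne (μ A) 0 with h0 | h0
  · exact .of_null h0
  obtain ⟨r, -, hr, hr_lim⟩ := exists_seq_strictMono_tendsto' (pos_iff_ne_zero.2 h0)
  choose K hKA hK hrK using fun n => hA.exists_isCompact_subset_le_measure (μ := μ) (hr n).2
  have hB : MeasurableSet (⋃ n, K n) := .iUnion fun n => (hK n).measurableSet
  have hle : μ A ≤ μ (⋃ n, K n) :=
    le_of_tendsto' hr_lim fun n => (hrK n).trans (measure_mono (subset_iUnion K n))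
  exact hB.nullMeasurableSet.congr <| ae_eq_of_subset_of_measure_ge (iUnion_subset hKA) hle
    hB.nullMeasurableSet (measure_ne_top μ A)

end Capacitability

end MeasureTheory

section MeasurableProjection

variable {Ξ X : Type*} [MeasurableSpace Ξ] [MeasurableSpace X]

/-- A measurable subset of `Ξ × X` only depends on countably many measurable subsets of `Ξ`. -/
theorem MeasurableSet.exists_eq_preimage_prodMap_natBool {M : Set (Ξ × X)}
    (hM : MeasurableSet M) : ∃ f : Ξ → ℕ → Bool, Measurable f ∧
      ∃ M' : Set ((ℕ → Bool) × X), MeasurableSet M' ∧ M = Prod.map f id ⁻¹' M' := by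
  classical
  rw [← generateFrom_prod] at hM
  induction hM with
  | basic M hM =>
    obtain ⟨A, hA, B, hB, rfl⟩ := hM
    refine ⟨fun ξ _ => if ξ ∈ A then true else false,
      measurable_pi_lambda _ fun _ => Measurable.ite hA measurable_const measurable_const,
      {y | y 0 = true} ×ˢ B,
      (measurableSet_eq_fun (measurable_pi_apply 0) measurable_const).prod hB, ?_⟩
    ext ⟨ξ, x⟩
    by_cases hξ : ξ ∈ A <;> simp [hξ]
  | empty => exact ⟨fun _ _ => true, measurable_const, ∅, .empty, rfl⟩
  | compl M _ ih =>
    obtain ⟨f, hf, M', hM', rfl⟩ := ih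
    exact ⟨f, hf, M'ᶜ, hM'.compl, rfl⟩
  | iUnion M _ ih =>
    choose f hf M' hM' hM using ih
    let proj (k : ℕ) : (ℕ → Bool) → ℕ → Bool := fun y j => y (Nat.pair k j)
    have hproj (k : ℕ) : Measurable (proj k) :=
      measurable_pi_lambda _ fun j => measurable_pi_apply (Nat.pair k j)
    refine ⟨fun ξ n => f n.unpair.1 ξ n.unpair.2,
      measurable_pi_lambda _ fun n => (hf n.unpair.1).eval,
      ⋃ k, Prod.map (proj k) id ⁻¹' M' k,
      .iUnion fun k => (hM' k).preimage ((hproj k).prodMap measurable_id), ?_⟩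
    ext ⟨ξ, x⟩
    simp [proj, hM]

theorem MeasurableSet.nullMeasurableSet_image_fst [TopologicalSpace X] [PolishSpace X]
    [BorelSpace X] (μ : Measure Ξ) [IsFiniteMeasure μ] {M : Set (Ξ × X)}
    (hM : MeasurableSet M) : NullMeasurableSet (Prod.fst '' M) μ := by
  obtain ⟨f, hf, M', hM', rfl⟩ := hM.exists_eq_preimage_prodMap_natBool
  have hfst : Prod.fst '' (Prod.map f id ⁻¹' M') = f ⁻¹' (Prod.fst '' M') := by
    ext ξ
    simp
  rw [hfst]
  exact ((hM'.analyticSet_image measurable_fst).nullMeasurableSet).preimage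
    (hf.quasiMeasurePreserving μ)

theorem MeasurableMultifun.of_measurableSet [TopologicalSpace X] [PolishSpace X] [BorelSpace X]
    (μ : Measure Ξ) [IsFiniteMeasure μ] [μ.IsComplete] {M : Set (Ξ × X)}
    (hM : MeasurableSet M) : MeasurableMultifun fun ξ => {x | (ξ, x) ∈ M} := by
  intro U hU
  have hfst : {ξ | ({x | (ξ, x) ∈ M} ∩ U).Nonempty} = Prod.fst '' (M ∩ univ ×ˢ U) := by
    ext ξ
    simp [Set.Nonempty]
  rw [hfst]
  exact ((hM.inter (MeasurableSet.univ.prod hU.measurableSet)).nullMeasurableSet_image_fst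
    μ).measurable_of_complete

end MeasurableProjection

namespace IsProductMeasure

variable {Ξ : Type*} [MeasurableSpace Ξ] {ℙ : Measure Ξ} {P : Measure (ℕ → Ξ)}

lemma ae_forall_apply (hP : IsProductMeasure P ℙ) {p : Ξ → Prop} (hp : ∀ᵐ ξ ∂ℙ, p ξ) :
    ∀ᵐ ω ∂P, ∀ i, p (ω i) := by
  refine ae_all_iff.2 fun i => measure_mono_null
    (t := {ω | ∀ j ∈ ({i} : Finset ℕ), ω j ∈ toMeasurable ℙ {ξ | ¬p ξ}}) ?_ ?_
  · intro ω hω j hj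
    rw [Finset.mem_singleton.1 hj]
    exact subset_toMeasurable ℙ _ hω
  · rw [hP _ _ fun _ => measurableSet_toMeasurable ℙ _]
    simpa [measure_toMeasurable] using ae_iff.1 hp

lemma ae_exists_apply_mem [IsProbabilityMeasure ℙ] (hP : IsProductMeasure P ℙ) {A : Set Ξ}
    (hA : MeasurableSet A) (hA0 : ℙ A ≠ 0) : ∀ᵐ ω ∂P, ∃ i, ω i ∈ A := by
  have hlt : ℙ Aᶜ < 1 := by
    rw [prob_compl_eq_one_sub hA]
    exact ENNReal.sub_lt_self ENNReal.one_ne_top one_ne_zero hA0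
  have hle (n : ℕ) : P {ω | ¬∃ i, ω i ∈ A} ≤ ℙ Aᶜ ^ n := by
    calc P {ω | ¬∃ i, ω i ∈ A} ≤ P {ω | ∀ i ∈ Finset.range n, ω i ∈ Aᶜ} :=
          measure_mono fun ω hω i _ hi => hω ⟨i, hi⟩
      _ = ℙ Aᶜ ^ n := by
          rw [hP _ _ fun _ => hA.compl, Finset.prod_const, Finset.card_range]
  exact ae_iff.2 <| nonpos_iff_eq_zero.1 <|
    ge_of_tendsto' (ENNReal.tendsto_pow_atTop_nhds_zero_of_lt_one hlt) hle

theorem ae_forall_ae_mem_of_forall_mem [IsProbabilityMeasure ℙ] (hP : IsProductMeasure P ℙ)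
    {X : Type*} [TopologicalSpace X] [SecondCountableTopology X] {F : Ξ → Set X}
    (hF : MeasurableMultifun F) (hF_closed : ∀ ξ, IsClosed (F ξ)) :
    ∀ᵐ ω ∂P, ∀ z, (∀ i, z ∈ F (ω i)) → ∀ᵐ ξ ∂ℙ, z ∈ F ξ := by
  -- If `z ∉ F ξ` on a non-null set, some basic open `U ∋ z` misses `F ξ` on a non-null set, and
  -- is then missed by some sample `F (ω i)`.
  let B := TopologicalSpace.countableBasis X
  have hB : TopologicalSpace.IsTopologicalBasis B := TopologicalSpace.isBasis_countableBasis X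
  have hB_countable : B.Countable := TopologicalSpace.countable_countableBasis X
  let miss (U : Set X) : Set Ξ := {ξ | (F ξ ∩ U).Nonempty}ᶜ
  have hmiss : ∀ᵐ ω ∂P, ∀ U ∈ B, ℙ (miss U) ≠ 0 → ∃ i, ω i ∈ miss U := by
    refine (ae_ball_iff hB_countable).2 fun U hU => ?_
    by_cases h0 : ℙ (miss U) = 0
    · exact .of_forall fun _ h => absurd h0 h
    · filter_upwards [hP.ae_exists_apply_mem (hF U (hB.isOpen hU)).compl h0] with ω hω
        using fun _ => hω
  filter_upwards [hmiss] with ω hω z hz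
  have hsub : {ξ | z ∉ F ξ} ⊆ ⋃ U ∈ {U ∈ B | z ∈ U}, miss U := by
    intro ξ hξ
    obtain ⟨U, hUB, hzU, hUF⟩ := hB.exists_subset_of_mem_open hξ (hF_closed ξ).isOpen_compl
    exact mem_biUnion ⟨hUB, hzU⟩ fun ⟨y, hyF, hyU⟩ => hUF hyU hyF
  refine measure_mono_null hsub <| (measure_biUnion_null_iff
    (hB_countable.mono (sep_subset _ _))).2 fun U ⟨hUB, hzU⟩ => ?_
  by_contra h0
  obtain ⟨i, hi⟩ := hω U hUB h0
  exact hi ⟨z, hz i, hzU⟩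

end IsProductMeasure

section Moreau

variable {d : ℕ} {g : EuclideanSpace ℝ (Fin d) → EReal}

lemma moreau_le_self (lam : ℝ) (x : EuclideanSpace ℝ (Fin d)) : moreau g lam x ≤ g x :=
  (iInf_le _ x).trans_eq (by simp)

lemma sq_div_sub_sq_div_le_of_le_norm_sub {E : Type*} [SeminormedAddCommGroup E] {x₀ u w : E}
    {δ μ lam : ℝ} (hμ : 0 < μ) (hμlam : 2 * μ ≤ lam) (hu : ‖u - x₀‖ ≤ δ / 2)
    (hw : δ / 2 ≤ ‖u - w‖) :
    δ ^ 2 / (8 * μ) - δ ^ 2 / (2 * lam) ≤ ‖u - w‖ ^ 2 / (2 * μ) - ‖x₀ - w‖ ^ 2 / (2 * lam) := by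
  have hlam : 0 < lam := by linarith
  have htri : ‖x₀ - w‖ ≤ ‖u - x₀‖ + ‖u - w‖ := by
    simpa [norm_sub_rev u x₀] using norm_sub_le_norm_sub_add_norm_sub x₀ u w
  set p := 1 / (2 * μ)
  set q := 1 / lam
  have hpq : q ≤ p := one_div_le_one_div_of_le (by positivity) hμlam
  have hq : 0 < q := by positivity
  have h1 : ‖x₀ - w‖ ^ 2 ≤ 2 * ‖u - x₀‖ ^ 2 + 2 * ‖u - w‖ ^ 2 := by
    nlinarith [norm_nonneg (x₀ - w), norm_nonneg (u - x₀), norm_nonneg (u - w)]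
  have h2 : ‖u - x₀‖ ^ 2 ≤ δ ^ 2 / 4 := by nlinarith [norm_nonneg (u - x₀)]
  have h3 : δ ^ 2 / 4 ≤ ‖u - w‖ ^ 2 := by nlinarith [norm_nonneg (u - x₀)]
  have e1 : δ ^ 2 / (8 * μ) - δ ^ 2 / (2 * lam) = δ ^ 2 / 4 * p - δ ^ 2 / 2 * q := by
    simp only [p, q]; field_simp; ring
  have e2 : ‖u - w‖ ^ 2 / (2 * μ) - ‖x₀ - w‖ ^ 2 / (2 * lam) =
      ‖u - w‖ ^ 2 * p - ‖x₀ - w‖ ^ 2 / 2 * q := by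
    simp only [p, q]; field_simp
  rw [e1, e2]
  nlinarith [mul_le_mul_of_nonneg_right h1 hq.le, mul_le_mul_of_nonneg_right h2 hq.le,
    mul_le_mul_of_nonneg_right h3 (sub_nonneg.2 hpq)]

lemma EReal.coe_le_add_coe_of_le_add_coe {a : EReal} {r s c t : ℝ} (h : (r : EReal) ≤ a + s)
    (hc : c + s ≤ r + t) : (c : EReal) ≤ a + t := by
  induction a with
  | bot => simp at h
  | coe a =>
    norm_cast at h ⊢
    linarith
  | top => simp

/-- Lower half of the epi-convergence `e_λ g → g` as `λ ↓ 0`: near `x₀` the envelope is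
controlled by lower semicontinuity, and far from `x₀` the quadratic penalty `‖u - w‖² / 2λ` beats
the quadratic minorant `r - ‖x₀ - w‖² / 2λ₀` coming from prox-boundedness. -/
theorem eventually_le_moreau (hg : LowerSemicontinuous g) {lam₀ : ℝ} (hlam₀ : 0 < lam₀)
    {x₀ : EuclideanSpace ℝ (Fin d)} (hprox : moreau g lam₀ x₀ ≠ ⊥) {ι : Type*} {l : Filter ι}
    {μ : ι → ℝ} (hμ : Tendsto μ l (𝓝[>] 0)) {u : ι → EuclideanSpace ℝ (Fin d)}
    (hu : Tendsto u l (𝓝 x₀)) {c : ℝ} (hc : (c : EReal) < g x₀) :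
    ∀ᶠ i in l, (c : EReal) ≤ moreau g (μ i) (u i) := by
  obtain ⟨r, hr⟩ : ∃ r : ℝ, (r : EReal) ≤ moreau g lam₀ x₀ := by
    induction h : moreau g lam₀ x₀ with
    | bot => exact absurd h hprox
    | coe r => exact ⟨r, le_rfl⟩
    | top => exact ⟨0, le_top⟩
  obtain ⟨δ, hδ, hgδ⟩ := Metric.eventually_nhds_iff.1 (hg x₀ c hc)
  have hμ_pos : ∀ᶠ i in l, 0 < μ i := hμ self_mem_nhdsWithin
  have hμ_small : ∀ᶠ i in l, 2 * μ i ≤ lam₀ :=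
    (tendsto_nhdsWithin_iff.1 hμ).1.eventually
      (eventually_le_nhds (by positivity : 0 < lam₀ / 2)) |>.mono fun i hi => by linarith
  have hμ_big : ∀ᶠ i in l, c - r + δ ^ 2 / (2 * lam₀) ≤ δ ^ 2 / (8 * μ i) := by
    have : Tendsto (fun i => δ ^ 2 / 8 * (μ i)⁻¹) l atTop :=
      (tendsto_inv_nhdsGT_zero.comp hμ).const_mul_atTop (by positivity)
    filter_upwards [this.eventually_ge_atTop (c - r + δ ^ 2 / (2 * lam₀))] with i hi
    exact hi.trans_eq (by field_simp)
  have hu_near : ∀ᶠ i in l, ‖u i - x₀‖ ≤ δ / 2 :=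
    hu.eventually (Metric.closedBall_mem_nhds x₀ (ε := δ / 2) (by positivity)) |>.mono
      fun i hi => by simpa [dist_eq_norm] using hi
  filter_upwards [hμ_pos, hμ_small, hμ_big, hu_near] with i hpos hsmall hbig hnear
  refine le_iInf fun w => ?_
  rcases lt_or_ge ‖u i - w‖ (δ / 2) with hw | hw
  · have hwx₀ : dist w x₀ < δ := by
      calc dist w x₀ ≤ ‖u i - w‖ + ‖u i - x₀‖ := by
            rw [dist_eq_norm, ← norm_neg (u i - w)]
            simpa using norm_add_le (-(u i - w)) (u i - x₀)
        _ < δ := by linarith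
    exact le_add_of_le_of_nonneg (hgδ hwx₀).le (EReal.coe_nonneg.2 (by positivity))
  · refine EReal.coe_le_add_coe_of_le_add_coe (hr.trans (iInf_le _ w)) ?_
    linarith [sq_div_sub_sq_div_le_of_le_norm_sub hpos hsmall hnear hw]

theorem le_limsup_moreau_of_mapClusterPt (hg : LowerSemicontinuous g) {lam₀ : ℝ}
    (hlam₀ : 0 < lam₀) {x₀ : EuclideanSpace ℝ (Fin d)} (hprox : moreau g lam₀ x₀ ≠ ⊥)
    {ι : Type*} {l : Filter ι} {μ : ι → ℝ} (hμ : Tendsto μ l (𝓝[>] 0))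
    {u : ι → EuclideanSpace ℝ (Fin d)} (hu : MapClusterPt x₀ l u) :
    g x₀ ≤ limsup (fun i => moreau g (μ i) (u i)) l := by
  obtain ⟨U, hUl, hU⟩ := mapClusterPt_iff_ultrafilter.1 hu
  refine le_of_forall_lt fun c hc => ?_
  obtain ⟨c', hcc', hc'⟩ := EReal.lt_iff_exists_real_btwn.1 hc
  calc c < c' := hcc'
    _ ≤ limsup (fun i => moreau g (μ i) (u i)) U :=
      le_limsup_of_frequently_le' (eventually_le_moreau hg hlam₀ hprox (hμ.mono_left hUl) hU
        hc').frequently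
    _ ≤ limsup (fun i => moreau g (μ i) (u i)) l := limsup_le_limsup_of_le hUl

end Moreau

lemma exists_countable_subset_vOn_eq {X : Type*} (h : X → EReal) (S : Set X) :
    ∃ D ⊆ S, D.Countable ∧ vOn h D = vOn h S := by
  rcases S.eq_empty_or_nonempty with rfl | hS
  · exact ⟨∅, subset_rfl, countable_empty, rfl⟩
  obtain ⟨y, -, -, hy_lim, hy_mem⟩ :=
    (isGLB_sInf (h '' S)).exists_seq_antitone_tendsto (hS.image h)
  choose z hzS hzy using hy_mem
  refine ⟨range z, range_subset_iff.2 hzS, countable_range z,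
    le_antisymm ?_ (biInf_mono (range_subset_iff.2 hzS))⟩
  rw [vOn, iInf_range, vOn, ← sInf_image]
  exact ge_of_tendsto' hy_lim fun n => (iInf_le (fun n => h (z n)) n).trans_eq (hzy n)

lemma le_liminf_of_forall_mapClusterPt {X : Type*} [TopologicalSpace X] {C : Set X}
    (hC : IsCompact C) {x : ℕ → X} (hxC : ∀ n, x n ∈ C) {a : ℕ → EReal} {b : EReal}
    (h : ∀ l ≤ atTop, ∀ y, MapClusterPt y l x → b ≤ limsup a l) : b ≤ liminf a atTop := by
  -- Compactness provides a cluster point along the indices where `a` stays below `c < b`.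
  by_contra! hlt
  obtain ⟨c, hac, hcb⟩ := exists_between hlt
  have hfreq : ∃ᶠ n in atTop, a n < c := frequently_lt_of_liminf_lt (by isBoundedDefault) hac
  let l := atTop ⊓ 𝓟 {n | a n < c}
  have : l.NeBot := frequently_iff_neBot.1 hfreq
  obtain ⟨y, -, hy⟩ := hC.exists_clusterPt (f := map x l)
    (le_principal_iff.2 (mem_map.2 (univ_mem' hxC)))
  have hlim : limsup a l ≤ c :=
    limsup_le_of_le (by isBoundedDefault)
      (eventually_inf_principal.2 (.of_forall fun _ hn => le_of_lt hn))
  exact (h l inf_le_left y hy |>.trans hlim).not_gt hcb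

theorem tendsto_vOn_of_limsup_le_of_mapClusterPt {X : Type*} [TopologicalSpace X]
    {C S : Set X} (hC : IsCompact C) {x : ℕ → X} (hxC : ∀ n, x n ∈ C) {a : ℕ → EReal}
    {h : X → EReal} (hup : limsup a atTop ≤ vOn h S)
    (hS : ∀ l ≤ atTop, ∀ y, MapClusterPt y l x → y ∈ S)
    (hlow : ∀ l ≤ atTop, ∀ y, MapClusterPt y l x → h y ≤ limsup a l) :
    Tendsto a atTop (𝓝 (vOn h S)) ∧
      ∀ y, MapClusterPt y atTop x → y ∈ S ∧ ∀ z ∈ S, h y ≤ h z := by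
  refine ⟨tendsto_of_le_liminf_of_limsup_le ?_ hup,
    fun y hy => ⟨hS _ le_rfl y hy, fun z hz => ?_⟩⟩
  · exact le_liminf_of_forall_mapClusterPt hC hxC fun l hl y hy =>
      (iInf₂_le y (hS l hl y hy)).trans (hlow l hl y hy)
  · exact (hlow _ le_rfl y hy).trans (hup.trans (iInf₂_le z hz))

theorem moreau_scenario_consistency_general {d : ℕ}
    {Ξ : Type*} [MeasurableSpace Ξ] (ℙ : Measure Ξ) [IsProbabilityMeasure ℙ] [ℙ.IsComplete]
    (P : Measure (ℕ → Ξ)) (hP : IsProductMeasure P ℙ)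
    (g : EuclideanSpace ℝ (Fin d) → EReal)
    (hg_lsc : LowerSemicontinuous g)
    (lamg : ℝ)
    (hprox : ∀ lam : ℝ, 0 < lam → lam < lamg → ∀ x, moreau g lam x ≠ ⊥)
    (φ : Ξ → EuclideanSpace ℝ (Fin d) → EReal)
    (hφ_meas : Measurable fun p : Ξ × EuclideanSpace ℝ (Fin d) => φ p.1 p.2)
    (hφ_lsc : ∀ ξ, LowerSemicontinuous (φ ξ))
    (C : Set (EuclideanSpace ℝ (Fin d))) (hC_bdd : Bornology.IsBounded C)
    (hC_closed : IsClosed C)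
    (lam : ℕ → ℝ) (hlam_pos : ∀ n, 0 < lam n) (hlam_lt : ∀ n, lam n < lamg)
    (hlam_to0 : Tendsto lam atTop (𝓝 0))
    (x : ℕ → (ℕ → Ξ) → EuclideanSpace ℝ (Fin d))
    (hx_min : ∀ᵐ ω ∂P, ∀ n,
      x n ω ∈ {z ∈ C | ∀ i ∈ Finset.range n, φ (ω i) z ≤ 0} ∧
      ∀ y ∈ {z ∈ C | ∀ i ∈ Finset.range n, φ (ω i) z ≤ 0},
        moreau g (lam n) (x n ω) ≤ moreau g (lam n) y) :
    ∀ᵐ ω ∂P,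
      Tendsto (fun n => moreau g (lam n) (x n ω)) atTop
        (𝓝 (vOn g {z | z ∈ C ∧ ∀ᵐ ξ ∂ℙ, φ ξ z ≤ 0})) ∧
      ∀ x₀, MapClusterPt x₀ atTop (fun n => x n ω) →
        (x₀ ∈ C ∧ ∀ᵐ ξ ∂ℙ, φ ξ x₀ ≤ 0) ∧
        ∀ y, (y ∈ C ∧ ∀ᵐ ξ ∂ℙ, φ ξ y ≤ 0) → g x₀ ≤ g y := by
  set S := {z | z ∈ C ∧ ∀ᵐ ξ ∂ℙ, φ ξ z ≤ 0}
  have hsample : ∀ᵐ ω ∂P, ∀ z, (∀ i, φ (ω i) z ≤ 0) → ∀ᵐ ξ ∂ℙ, φ ξ z ≤ 0 :=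
    hP.ae_forall_ae_mem_of_forall_mem (F := fun ξ => {z | φ ξ z ≤ 0})
      (MeasurableMultifun.of_measurableSet ℙ (hφ_meas measurableSet_Iic))
      fun ξ => (hφ_lsc ξ).isClosed_preimage 0
  obtain ⟨D, hDS, hD_countable, hD_vOn⟩ := exists_countable_subset_vOn_eq g S
  have hD : ∀ᵐ ω ∂P, ∀ z ∈ D, ∀ i, φ (ω i) z ≤ 0 :=
    (ae_ball_iff hD_countable).2 fun z hz => hP.ae_forall_apply (hDS hz).2
  have hlam : Tendsto lam atTop (𝓝[>] 0) :=
    tendsto_nhdsWithin_iff.2 ⟨hlam_to0, .of_forall hlam_pos⟩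
  filter_upwards [hx_min, hsample, hD] with ω hmin hsample hD
  refine tendsto_vOn_of_limsup_le_of_mapClusterPt
    (Metric.isCompact_of_isClosed_isBounded hC_closed hC_bdd) (fun n => (hmin n).1.1) ?_ ?_
    fun l hl y hy => le_limsup_moreau_of_mapClusterPt hg_lsc (hlam_pos 0)
      (hprox _ (hlam_pos 0) (hlam_lt 0) y) (hlam.mono_left hl) hy
  · refine limsup_le_of_le (by isBoundedDefault) (.of_forall fun n => ?_)
    rw [← hD_vOn]
    exact le_iInf₂ fun z hz =>
      ((hmin n).2 z ⟨(hDS hz).1, fun i _ => hD z hz i⟩).trans (moreau_le_self _ z)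
  · intro l hl y hy
    have hmem {s} (hs : IsClosed s) (h : ∀ᶠ n in l, x n ω ∈ s) : y ∈ s :=
      hs.closure_subset (hy.clusterPt.mem_closure_of_mem (s := s) h)
    refine ⟨hmem hC_closed (.of_forall fun n => (hmin n).1.1), hsample y fun i => ?_⟩
    exact hmem ((hφ_lsc _).isClosed_preimage 0) <|
      (Eventually.filter_mono hl (eventually_gt_atTop i)).mono
        fun n hn => (hmin n).1.2 i (Finset.mem_range.2 hn)

/-- Moreau-envelope scenario approach. For a proper lsc prox-bounded
`g : ℝ^d → ℝ ∪ {+∞}` with threshold `λ_g > 0`, a normal integrand `φ`, a bounded closed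
set `C`, `λ_n ↓ 0` in `(0, λ_g)`, and measurable selections `x n ω` of minimizers of
`e_{λ_n} g` over `{x ∈ C : φ (ω i) x ≤ 0, i < n}`, for `P`-a.e. `ω`:
(a) `e_{λ_n} g (x n ω)` converges to the optimal value of the robust problem, and
(b) every cluster point of `(x n ω)` is a minimizer of the robust problem. -/
theorem moreau_scenario_consistency {d : ℕ}
    {Ξ : Type*} [MeasurableSpace Ξ] (ℙ : Measure Ξ) [IsProbabilityMeasure ℙ] [ℙ.IsComplete]
    (P : Measure (ℕ → Ξ)) [IsProbabilityMeasure P] (hP : IsProductMeasure P ℙ)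
    (g : EuclideanSpace ℝ (Fin d) → EReal)
    (hg_noBot : ∀ x, g x ≠ ⊥) (hg_proper : ∃ x, g x ≠ ⊤) (hg_lsc : LowerSemicontinuous g)
    (lamg : ℝ) (hlamg : 0 < lamg)
    (hprox : ∀ lam : ℝ, 0 < lam → lam < lamg → ∀ x, moreau g lam x ≠ ⊥)
    (φ : Ξ → EuclideanSpace ℝ (Fin d) → EReal)
    (hφ_meas : Measurable fun p : Ξ × EuclideanSpace ℝ (Fin d) => φ p.1 p.2)
    (hφ_lsc : ∀ ξ, LowerSemicontinuous (φ ξ))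
    (C : Set (EuclideanSpace ℝ (Fin d))) (hC_bdd : Bornology.IsBounded C)
    (hC_closed : IsClosed C)
    (hfeas : ∃ x ∈ C, g x < ⊤ ∧ ∀ᵐ ξ ∂ℙ, φ ξ x ≤ 0)
    (lam : ℕ → ℝ) (hlam_pos : ∀ n, 0 < lam n) (hlam_lt : ∀ n, lam n < lamg)
    (hlam_anti : Antitone lam) (hlam_to0 : Tendsto lam atTop (𝓝 0))
    (x : ℕ → (ℕ → Ξ) → EuclideanSpace ℝ (Fin d)) (hx_meas : ∀ n, Measurable (x n))
    (hx_min : ∀ᵐ ω ∂P, ∀ n,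
      x n ω ∈ {z ∈ C | ∀ i ∈ Finset.range n, φ (ω i) z ≤ 0} ∧
      ∀ y ∈ {z ∈ C | ∀ i ∈ Finset.range n, φ (ω i) z ≤ 0},
        moreau g (lam n) (x n ω) ≤ moreau g (lam n) y) :
    ∀ᵐ ω ∂P,
      Tendsto (fun n => moreau g (lam n) (x n ω)) atTop
        (𝓝 (vOn g {z | z ∈ C ∧ ∀ᵐ ξ ∂ℙ, φ ξ z ≤ 0})) ∧
      ∀ x₀, MapClusterPt x₀ atTop (fun n => x n ω) →
        (x₀ ∈ C ∧ ∀ᵐ ξ ∂ℙ, φ ξ x₀ ≤ 0) ∧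
        ∀ y, (y ∈ C ∧ ∀ᵐ ξ ∂ℙ, φ ξ y ≤ 0) → g x₀ ≤ g y :=
  moreau_scenario_consistency_general ℙ P hP g hg_lsc lamg hprox φ hφ_meas hφ_lsc C hC_bdd hC_closed
    lam hlam_pos hlam_lt hlam_to0 x hx_min
end
end

section
/- Let S be a topological space, X a metric space, and M : S ⇉ X an outer-semicontinuous set-valued map. Let 𝒜 be a σ-algebra on S containing all open subsets of S, and let μ : 𝒜 → [0, ∞) be a finite, strictly positive measure (μ(U) > 0 for every nonempty open U ⊆ S). Then the set of points feasible μ-almost everywhere equals the set of points feasible everywhere: {x ∈ X : x ∈ M(s) for μ-a.e. s ∈ S} = ⋂_{s ∈ S} M(s). -/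
open Filter Topology MeasureTheory Set

noncomputable section

theorem IsClosed.setOf_mem_of_isClosed_graph {S X : Type*} [TopologicalSpace S]
    [TopologicalSpace X] {M : S → Set X} (hM : IsClosed {p : S × X | p.2 ∈ M p.1}) (x : X) :
    IsClosed {s | x ∈ M s} :=
  hM.preimage (Continuous.prodMk_left x)

theorem IsClosed.eq_univ_of_ae_mem {S : Type*} [TopologicalSpace S] [MeasurableSpace S]
    {μ : Measure S} [μ.IsOpenPosMeasure] {C : Set S} (hC : IsClosed C) (h : ∀ᵐ s ∂μ, s ∈ C) :
    C = univ := by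
  simpa [hC.closure_eq] using (Measure.dense_of_ae h).closure_eq

theorem ae_feasible_eq_iInter_general {S : Type*} [TopologicalSpace S] [MeasurableSpace S]
    {X : Type*} [MetricSpace X]
    (M : S → Set X) (hM_osc : IsClosed {p : S × X | p.2 ∈ M p.1})
    (μ : Measure S)
    (hμ_pos : ∀ U : Set S, IsOpen U → U.Nonempty → 0 < μ U) :
    {x : X | ∀ᵐ s ∂μ, x ∈ M s} = ⋂ s, M s := by
  have : μ.IsOpenPosMeasure := ⟨fun U hU hne => (hμ_pos U hU hne).ne'⟩
  ext x
  refine ⟨fun hae => mem_iInter.2 fun s => ?_, fun hx => ae_of_all μ (mem_iInter.1 hx)⟩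
  exact eq_univ_iff_forall.1 ((hM_osc.setOf_mem_of_isClosed_graph x).eq_univ_of_ae_mem hae) s

/-- for an outer-semicontinuous multifunction `M` (closed graph) and a
finite strictly positive measure `μ` on a σ-algebra containing the open sets, the set of
points feasible `μ`-a.e. equals the set of points feasible everywhere. -/
theorem ae_feasible_eq_iInter {S : Type*} [TopologicalSpace S] [MeasurableSpace S]
    {X : Type*} [MetricSpace X]
    (M : S → Set X) (hM_osc : IsClosed {p : S × X | p.2 ∈ M p.1})
    (hopen_meas : ∀ U : Set S, IsOpen U → MeasurableSet U)
    (μ : Measure S) [IsFiniteMeasure μ]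
    (hμ_pos : ∀ U : Set S, IsOpen U → U.Nonempty → 0 < μ U) :
    {x : X | ∀ᵐ s ∂μ, x ∈ M s} = ⋂ s, M s :=
  ae_feasible_eq_iInter_general M hM_osc μ hμ_pos
end
end

section
/- Let X be a Polish space, S a topological space, 𝒜 a σ-algebra on S containing all open subsets of S, and μ : 𝒜 → [0, ∞) a finite, strictly positive measure such that the measure space (S, 𝒜, μ) is complete. Let M : S ⇉ X be an outer-semicontinuous set-valued map with closed values that is also measurable, let T : S → S be an ergodic measure-preserving transformation with respect to the normalized measure ℙ := μ/μ(S), let g : X → ℝ ∪ {+∞} be lower semicontinuous, and let g_n : X → ℝ ∪ {+∞} be lower semicontinuous functions converging continuously to g. Set I_n(s) := ⋂_{k=1}^n M(T^k(s)) and M_a := ⋂_{s ∈ S} M(s). Assume the infinite programming problem min{g(x) : x ∈ M_a} is feasible (there exists x ∈ M_a with g(x) < +∞) and that, for μ-a.e. s, the sequence g_n is eventually level-compact on I_n(s). Then for μ-a.e. s ∈ S, lim_n v(g_n, I_n(s)) = v(g, M_a). -/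
open Filter Topology MeasureTheory Set

noncomputable section

open TopologicalSpace

/-! Ergodicity makes almost every orbit visit each set `{s | M s ∩ B = ∅}` of positive measure,
`B` running over a countable basis of `X`. If `x ∉ M s₀`, the set `{s | x ∉ M s}` is open by
outer semicontinuity, hence of positive measure, and it is covered by those sets with `x ∈ B`;
so for a.e. `s` the decreasing closed sets `I n s` shrink exactly to `M_a`. The rest is
deterministic: continuous convergence along constant sequences in `M_a` gives
`limsup v_n ≤ v`, and eventual level-compactness makes near-minimizers of `g n` on `I n s`
accumulate at a point of `M_a`, where continuous convergence gives `liminf v_n ≥ v`. -/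

theorem Ergodic.ae_exists_iterate_succ_mem {S : Type*} [MeasurableSpace S] {μ : Measure S}
    [IsFiniteMeasure μ] {T : S → S} (hT : Ergodic T μ) {E : Set S} (hE : MeasurableSet E)
    (hE₀ : μ E ≠ 0) : ∀ᵐ s ∂μ, ∃ k, T^[k + 1] s ∈ E := by
  set B := ⋃ k, T^[k + 1] ⁻¹' E
  have hB : MeasurableSet B := .iUnion fun k => hT.measurable.iterate (k + 1) hE
  have hTB : T ⁻¹' B ⊆ B := by
    simp only [B, preimage_iUnion, ← preimage_comp, ← Function.iterate_succ]
    exact iUnion_subset fun k => subset_iUnion (fun k => T^[k + 1] ⁻¹' E) (k + 1)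
  rcases hT.ae_empty_or_univ_of_preimage_ae_le hB.nullMeasurableSet hTB.eventuallyLE with
    hB₀ | hB₁
  · refine absurd (measure_mono_null (subset_iUnion (fun k => T^[k + 1] ⁻¹' E) 0)
      ((measure_congr hB₀).trans measure_empty)) ?_
    rwa [(hT.toMeasurePreserving.iterate 1).measure_preimage hE.nullMeasurableSet]
  · filter_upwards [hB₁.mem_iff] with s hs
    simpa [B] using hs

theorem exists_mem_countableBasis_measure_ne_zero {S X : Type*} [TopologicalSpace S]
    [MeasurableSpace S] [TopologicalSpace X] [SecondCountableTopology X] (μ : Measure S)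
    [μ.IsOpenPosMeasure] {M : S → Set X} (hM : IsClosed {p : S × X | p.2 ∈ M p.1}) {x : X}
    {s₀ : S} (hx : x ∉ M s₀) :
    ∃ B ∈ countableBasis X, x ∈ B ∧ μ {s | M s ∩ B = ∅} ≠ 0 := by
  by_contra! h
  have hU : IsOpen {s | x ∉ M s} := (hM.preimage (Continuous.prodMk_left x)).isOpen_compl
  have hcover :
      {s | x ∉ M s} ⊆ ⋃ B ∈ {B ∈ countableBasis X | x ∈ B}, {s | M s ∩ B = ∅} := by
    intro s hs
    obtain ⟨B, hBb, hxB, hBM⟩ := (isBasis_countableBasis X).exists_subset_of_mem_open hs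
      (hM.preimage (Continuous.prodMk_right s)).isOpen_compl
    exact mem_biUnion ⟨hBb, hxB⟩ (subset_compl_iff_disjoint_left.1 hBM).inter_eq
  refine hU.measure_ne_zero μ ⟨s₀, hx⟩ (measure_mono_null hcover ?_)
  exact (measure_biUnion_null_iff ((countable_countableBasis X).mono (sep_subset _ _))).2
    fun B hB => h B hB.1 hB.2

theorem Ergodic.ae_iInter_iterate_succ_subset_iInter {S X : Type*} [TopologicalSpace S]
    [MeasurableSpace S] [TopologicalSpace X] [SecondCountableTopology X] {μ : Measure S}
    [IsFiniteMeasure μ] [μ.IsOpenPosMeasure] {T : S → S} (hT : Ergodic T μ) {M : S → Set X}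
    (hM_osc : IsClosed {p : S × X | p.2 ∈ M p.1}) (hM_meas : MeasurableMultifun M) :
    ∀ᵐ s ∂μ, ⋂ k, M (T^[k + 1] s) ⊆ ⋂ s, M s := by
  have hvisit : ∀ᵐ s ∂μ, ∀ B ∈ countableBasis X,
      μ {s | M s ∩ B = ∅} ≠ 0 → ∃ k, T^[k + 1] s ∈ {s | M s ∩ B = ∅} := by
    refine (ae_ball_iff (countable_countableBasis X)).2 fun B hB => ?_
    by_cases h : μ {s | M s ∩ B = ∅} = 0
    · exact .of_forall fun _ h' => absurd h h'
    · have hE : MeasurableSet {s | M s ∩ B = ∅} := by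
        simpa only [compl_ofPred, not_nonempty_iff_eq_empty] using
          (hM_meas B (isOpen_of_mem_countableBasis hB)).compl
      filter_upwards [hT.ae_exists_iterate_succ_mem hE h] with s hs _ using hs
  filter_upwards [hvisit] with s hs x hx
  refine mem_iInter.2 fun s₀ => by_contra fun hx₀ => ?_
  obtain ⟨B, hBb, hxB, hB⟩ := exists_mem_countableBasis_measure_ne_zero μ hM_osc hx₀
  obtain ⟨k, hk⟩ := hs B hBb hB
  exact (eq_empty_iff_forall_notMem.1 hk) x ⟨mem_iInter.1 hx k, hxB⟩

section ContConv

variable {X : Type*} [MetricSpace X] {f : ℕ → X → EReal} {g : X → EReal}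

theorem ContConv.tendsto_comp_subseq (hfg : ContConv f g) {σ : ℕ → ℕ} (hσ : StrictMono σ)
    {y : ℕ → X} {x : X} (hy : Tendsto y atTop (𝓝 x)) :
    Tendsto (fun j => f (σ j) (y j)) atTop (𝓝 (g x)) := by
  -- `ι ∘ σ = id` and `ι → ∞`, so `y ∘ ι` tends to `x` and extends `y` along `σ`.
  let ι : ℕ → ℕ := fun n => Nat.findGreatest (fun j => σ j ≤ n) n
  have hισ : ∀ j, ι (σ j) = j := fun j => le_antisymm
    (hσ.le_iff_le.1 (Nat.findGreatest_spec (P := fun i => σ i ≤ σ j) hσ.le_apply le_rfl))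
    (Nat.le_findGreatest hσ.le_apply le_rfl)
  have hι : Tendsto ι atTop atTop := tendsto_atTop_atTop.2 fun j =>
    ⟨σ j, fun n hn => Nat.le_findGreatest (hσ.le_apply.trans hn) hn⟩
  simpa only [Function.comp_def, hισ] using
    (hfg x (y ∘ ι) (hy.comp hι)).comp hσ.tendsto_atTop

theorem limsup_vOn_le_of_contConv (hfg : ContConv f g) (C : ℕ → Set X) :
    limsup (fun n => vOn (f n) (C n)) atTop ≤ vOn g (⋂ n, C n) :=
  le_iInf₂ fun x hx =>
    calc limsup (fun n => vOn (f n) (C n)) atTop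
        ≤ limsup (fun n => f n x) atTop :=
          limsup_le_limsup (.of_forall fun n => iInf₂_le x (mem_iInter.1 hx n))
      _ = g x := (hfg x _ tendsto_const_nhds).limsup_eq

theorem le_liminf_vOn_of_contConv (hfg : ContConv f g) {C : ℕ → Set X}
    (hlc : EvLevelCompact f C) (hC : Antitone C) (hC_closed : ∀ n, IsClosed (C n)) :
    vOn g (⋂ n, C n) ≤ liminf (fun n => vOn (f n) (C n)) atTop := by
  by_contra! h
  obtain ⟨α, hα_lim, hα_v⟩ := EReal.exists_between_coe_real h
  obtain ⟨N, hK⟩ := hlc α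
  have hfreq : ∃ᶠ n in atTop, N ≤ n ∧ ∃ x ∈ C n, f n x < α :=
    ((frequently_lt_of_liminf_lt (h := hα_lim)).and_eventually (eventually_ge_atTop N)).mono
      fun n ⟨hn, hN⟩ => ⟨hN, by simpa only [vOn, iInf_lt_iff, exists_prop] using hn⟩
  obtain ⟨φ, hφ, hφx⟩ := extraction_of_frequently_atTop hfreq
  choose hφN x hxC hfx using hφx
  obtain ⟨x', -, ψ, hψ, hx'⟩ := hK.tendsto_subseq fun j =>
    subset_closure (mem_biUnion (hφN j) ⟨hxC j, (hfx j).le⟩)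
  have hσ : StrictMono (φ ∘ ψ) := hφ.comp hψ
  have hx'C : x' ∈ ⋂ n, C n := mem_iInter.2 fun m => (hC_closed m).mem_of_tendsto hx'
    ((hσ.tendsto_atTop.eventually_ge_atTop m).mono fun j hj => hC hj (hxC (ψ j)))
  have hgx' : g x' ≤ α :=
    le_of_tendsto (hfg.tendsto_comp_subseq hσ hx') (.of_forall fun j => (hfx (ψ j)).le)
  exact hα_v.not_ge ((iInf₂_le x' hx'C).trans hgx')

theorem tendsto_vOn_iInter_of_contConv (hfg : ContConv f g) {C : ℕ → Set X}
    (hlc : EvLevelCompact f C) (hC : Antitone C) (hC_closed : ∀ n, IsClosed (C n)) :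
    Tendsto (fun n => vOn (f n) (C n)) atTop (𝓝 (vOn g (⋂ n, C n))) :=
  tendsto_of_le_liminf_of_limsup_le (le_liminf_vOn_of_contConv hfg hlc hC hC_closed)
    (limsup_vOn_le_of_contConv hfg C)

end ContConv

theorem infinite_programming_value_convergence_general {X : Type*} [MetricSpace X] [PolishSpace X]
    {S : Type*} [TopologicalSpace S] [MeasurableSpace S]
    (μ : Measure S) [IsFiniteMeasure μ]
    (hμ_pos : ∀ U : Set S, IsOpen U → U.Nonempty → 0 < μ U)
    (M : S → Set X) (hM_osc : IsClosed {p : S × X | p.2 ∈ M p.1})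
    (hM_meas : MeasurableMultifun M)
    (T : S → S) (hT : Ergodic T ((μ Set.univ)⁻¹ • μ))
    (g : X → EReal) (gn : ℕ → X → EReal)
    (hcc : ContConv gn g)
    (hlc : ∀ᵐ s ∂μ, EvLevelCompact gn (fun n => ⋂ k ∈ Finset.Icc 1 n, M (T^[k] s))) :
    ∀ᵐ s ∂μ,
      Tendsto (fun n => vOn (gn n) (⋂ k ∈ Finset.Icc 1 n, M (T^[k] s))) atTop
        (𝓝 (vOn g (⋂ s, M s))) := by
  have hc : (μ univ)⁻¹ ≠ 0 := ENNReal.inv_ne_zero.2 (measure_ne_top μ univ)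
  have : IsFiniteMeasure ((μ univ)⁻¹ • μ) := ⟨(ENNReal.inv_mul_ne_top _).lt_top⟩
  have : μ.IsOpenPosMeasure := ⟨fun U hU hne => (hμ_pos U hU hne).ne'⟩
  have : ((μ univ)⁻¹ • μ).IsOpenPosMeasure := Measure.isOpenPosMeasure_smul μ hc
  have hM_closed (s : S) : IsClosed (M s) := hM_osc.preimage (Continuous.prodMk_right s)
  have horbit := Measure.ae_ennreal_smul_measure_eq hc μ ▸
    hT.ae_iInter_iterate_succ_subset_iInter hM_osc hM_meas
  filter_upwards [horbit, hlc] with s hs hlcs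
  have hI : ⋂ n, ⋂ k ∈ Finset.Icc 1 n, M (T^[k] s) = ⋂ s, M s := by
    refine Subset.antisymm (fun x hx => hs (mem_iInter.2 fun k => ?_))
      (subset_iInter fun n => subset_iInter₂ fun k _ => iInter_subset M _)
    exact mem_iInter₂.1 (mem_iInter.1 hx (k + 1)) (k + 1)
      (Finset.mem_Icc.2 ⟨le_add_self, le_rfl⟩)
  rw [← hI]
  exact tendsto_vOn_iInter_of_contConv hcc hlcs
    (fun m n hmn => biInter_subset_biInter_left (Finset.Icc_subset_Icc_right hmn))
    fun n => isClosed_biInter fun k _ => hM_closed _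

/-- ergodic approach to infinite programming. With `μ` a finite strictly
positive complete measure on `S`, `M` outer-semicontinuous, closed-valued and measurable,
`T` ergodic measure-preserving with respect to `ℙ := μ/μ(S)`, the infinite program
feasible and `g n` eventually level-compact on `I n s` for a.e. `s`, the values converge:
`v(g n, I n s) → v(g, M_a)` for `μ`-a.e. `s`. -/
theorem infinite_programming_value_convergence {X : Type*} [MetricSpace X] [PolishSpace X]
    {S : Type*} [TopologicalSpace S] [MeasurableSpace S]
    (hopen_meas : ∀ U : Set S, IsOpen U → MeasurableSet U)
    (μ : Measure S) [IsFiniteMeasure μ] [μ.IsComplete]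
    (hμ_pos : ∀ U : Set S, IsOpen U → U.Nonempty → 0 < μ U)
    (M : S → Set X) (hM_osc : IsClosed {p : S × X | p.2 ∈ M p.1})
    (hM_closed : ∀ s, IsClosed (M s)) (hM_meas : MeasurableMultifun M)
    (T : S → S) (hT : Ergodic T ((μ Set.univ)⁻¹ • μ))
    (g : X → EReal) (gn : ℕ → X → EReal)
    (hg_noBot : ∀ x, g x ≠ ⊥) (hgn_noBot : ∀ n x, gn n x ≠ ⊥)
    (hg_lsc : LowerSemicontinuous g) (hgn_lsc : ∀ n, LowerSemicontinuous (gn n))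
    (hcc : ContConv gn g)
    (hfeas : ∃ x ∈ ⋂ s, M s, g x < ⊤)
    (hlc : ∀ᵐ s ∂μ, EvLevelCompact gn (fun n => ⋂ k ∈ Finset.Icc 1 n, M (T^[k] s))) :
    ∀ᵐ s ∂μ,
      Tendsto (fun n => vOn (gn n) (⋂ k ∈ Finset.Icc 1 n, M (T^[k] s))) atTop
        (𝓝 (vOn g (⋂ s, M s))) :=
  infinite_programming_value_convergence_general μ hμ_pos M hM_osc hM_meas T hT g gn hcc hlc
end
end

section
/- Let X be a Polish space, S a topological space, 𝒜 a σ-algebra on S containing all open subsets of S, and μ : 𝒜 → [0, ∞) a finite, strictly positive measure such that the measure space (S, 𝒜, μ) is complete. Let M : S ⇉ X be an outer-semicontinuous set-valued map with closed values that is also measurable, let T : S → S be an ergodic measure-preserving transformation with respect to the normalized measure ℙ := μ/μ(S), let g : X → ℝ ∪ {+∞} be lower semicontinuous, and let g_n : X → ℝ ∪ {+∞} be lower semicontinuous functions converging continuously to g. Set I_n(s) := ⋂_{k=1}^n M(T^k(s)) and M_a := ⋂_{s ∈ S} M(s). Assume the infinite programming problem min{g(x) : x ∈ M_a} is feasible (there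 exists x ∈ M_a with g(x) < +∞) and that, for μ-a.e. s, the sequence g_n is eventually level-compact on I_n(s). Then for any measurable functions ε_n : S → (0, +∞) with ε_n(s) → 0 for μ-a.e. s, one has, for μ-a.e. s ∈ S: ∅ ≠ limsup_n (ε_n(s)-argmin_{I_n(s)} g_n) ⊆ argmin_{M_a} g, where limsup_n denotes the Painlevé–Kuratowski outer limit of sets. -/
open Filter Topology MeasureTheory Set

noncomputable section

/-!
Ergodicity makes almost every orbit `T s, T² s, …` enter each nonempty open set
`interior {s | Disjoint (M s) b}`, `b` running through a countable basis of `X`; since the graph of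
`M` is closed, this forces `⋂ₖ M (Tᵏ⁺¹ s) = M_a`. For such `s` the constraint sets `I n s` decrease
to `M_a` and the statement becomes deterministic. Testing with constant sequences, continuous
convergence gives `limsup inf_{I n} gₙ ≤ inf_{M_a} g`; eventual level-compactness lets one extract
convergent subsequences of near-minimizers, whose limits lie in `M_a` and carry the limit value.
This gives the reverse inequality, finiteness of the optimal value, a cluster point of the
`εₙ`-argmins, and minimality on `M_a` of every such cluster point.
-/

theorem iInter_biInter_Icc_one {α : Type*} (A : ℕ → Set α) :
    ⋂ n, ⋂ k ∈ Finset.Icc 1 n, A k = ⋂ k, A (k + 1) := by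
  ext x
  simp only [mem_iInter, Finset.mem_Icc]
  refine ⟨fun h k => h (k + 1) (k + 1) ⟨Nat.le_add_left 1 k, le_rfl⟩, ?_⟩
  rintro h n k ⟨hk, -⟩
  obtain ⟨k, rfl⟩ := Nat.exists_eq_add_of_le' hk
  exact h k

theorem Ergodic.ae_exists_iterate_mem {S : Type*} [MeasurableSpace S] {P : Measure S}
    [IsFiniteMeasure P] {T : S → S} (hT : Ergodic T P) {A : Set S} (hA : MeasurableSet A)
    (hPA : P A ≠ 0) : ∀ᵐ s ∂P, ∃ k, T^[k + 1] s ∈ A := by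
  set R := ⋃ k, T^[k + 1] ⁻¹' A
  have hR : MeasurableSet R := MeasurableSet.iUnion fun k => hT.measurable.iterate (k + 1) hA
  have hTR : T ⁻¹' R ⊆ R := by
    simp only [R, preimage_iUnion, ← preimage_comp, ← Function.iterate_succ]
    exact iUnion_subset fun k => subset_iUnion_of_subset (k + 1) subset_rfl
  rcases hT.ae_empty_or_univ_of_preimage_ae_le hR.nullMeasurableSet hTR.eventuallyLE with hR0 | hR1
  · refine absurd ?_ hPA
    rw [← (hT.toMeasurePreserving.iterate 1).measure_preimage hA.nullMeasurableSet]
    exact measure_mono_null (subset_iUnion (fun k => T^[k + 1] ⁻¹' A) 0)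
      ((measure_congr hR0).trans measure_empty)
  · exact Eventually.mono (mem_ae_iff.2 (ae_eq_univ.1 hR1)) fun s hs => mem_iUnion.1 hs

theorem iInter_subset_iInter_of_isClosed_graph {S X ι : Type*} [TopologicalSpace S]
    [TopologicalSpace X] {M : S → Set X} (hM : IsClosed {p : S × X | p.2 ∈ M p.1})
    {B : Set (Set X)} (hB : TopologicalSpace.IsTopologicalBasis B) {r : ι → S}
    (hr : ∀ b ∈ B, (interior {s | Disjoint (M s) b}).Nonempty → ∃ i, Disjoint (M (r i)) b) :
    ⋂ i, M (r i) ⊆ ⋂ s, M s := by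
  intro x hx
  refine mem_iInter.2 fun s => by_contra fun hxs => ?_
  obtain ⟨U, V, hU, hV, hsU, hxV, hUV⟩ := isOpen_prod_iff.1 hM.isOpen_compl s x hxs
  obtain ⟨b, hb, hxb, hbV⟩ := hB.exists_subset_of_mem_open hxV hV
  have hU_disj : U ⊆ {s | Disjoint (M s) b} := fun s' hs' =>
    Set.disjoint_left.2 fun y hyM hyb => hUV (mk_mem_prod hs' (hbV hyb)) hyM
  obtain ⟨i, hi⟩ := hr b hb ⟨s, interior_maximal hU_disj hU hsU⟩
  exact Set.disjoint_left.1 hi (mem_iInter.1 hx i) hxb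

open TopologicalSpace in
theorem Ergodic.ae_iInter_iterate_eq {S X : Type*} [TopologicalSpace S] [MeasurableSpace S]
    [TopologicalSpace X] [SecondCountableTopology X] {P : Measure S} [IsFiniteMeasure P]
    {T : S → S} (hT : Ergodic T P) (hopen : ∀ U : Set S, IsOpen U → MeasurableSet U)
    (hpos : ∀ U : Set S, IsOpen U → U.Nonempty → P U ≠ 0) {M : S → Set X}
    (hM : IsClosed {p : S × X | p.2 ∈ M p.1}) :
    ∀ᵐ s ∂P, ⋂ k, M (T^[k + 1] s) = ⋂ s, M s := by
  have hvisit : ∀ᵐ s ∂P, ∀ b ∈ countableBasis X,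
      (interior {s | Disjoint (M s) b}).Nonempty →
        ∃ k, T^[k + 1] s ∈ interior {s | Disjoint (M s) b} := by
    refine (ae_ball_iff (countable_countableBasis X)).2 fun b _ => ?_
    by_cases hne : (interior {s | Disjoint (M s) b}).Nonempty
    · exact (hT.ae_exists_iterate_mem (hopen _ isOpen_interior)
        (hpos _ isOpen_interior hne)).mono fun s hs _ => hs
    · exact Eventually.of_forall fun s h => absurd h hne
  filter_upwards [hvisit] with s hs
  refine (iInter_subset_iInter_of_isClosed_graph hM (isBasis_countableBasis X)
    fun b hb hne => ?_).antisymm fun x hx => mem_iInter.2 fun k => mem_iInter.1 hx _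
  obtain ⟨k, hk⟩ := hs b hb hne
  exact ⟨k, interior_subset hk⟩

section ExtendedValues

variable {X : Type*} {h : X → EReal} {C : Set X}

theorem exists_mem_lt_of_vOn_lt {a : EReal} (hlt : vOn h C < a) : ∃ x ∈ C, h x < a := by
  simpa only [vOn, iInf_lt_iff, exists_prop] using hlt

theorem vEpsOn_of_ne_bot (hv : vOn h C ≠ ⊥) (ε : ℝ) : vEpsOn h C ε = vOn h C + ε := if_neg hv

theorem argminOn_zero_of_ne_bot (hv : vOn h C ≠ ⊥) : argminOn h C 0 = {x ∈ C | h x ≤ vOn h C} := by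
  simp only [argminOn, vEpsOn_of_ne_bot hv, EReal.coe_zero, add_zero]

theorem argminOn_nonempty {ε : ℝ} (hv_bot : vOn h C ≠ ⊥) (hv_top : vOn h C ≠ ⊤) (hε : 0 < ε) :
    (argminOn h C ε).Nonempty := by
  have hlt : vOn h C < vEpsOn h C ε := by
    rw [vEpsOn_of_ne_bot hv_bot, ← EReal.coe_toReal hv_top hv_bot, ← EReal.coe_add]
    exact EReal.coe_lt_coe_iff.2 (lt_add_of_pos_right _ hε)
  obtain ⟨x, hxC, hx⟩ := exists_mem_lt_of_vOn_lt hlt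
  exact ⟨x, hxC, hx.le⟩

theorem tendsto_vEpsOn {f : ℕ → X → EReal} {D : ℕ → Set X} {ε : ℕ → ℝ} {v : EReal}
    (hv : Tendsto (fun n => vOn (f n) (D n)) atTop (𝓝 v)) (hv_bot : v ≠ ⊥)
    (hε : Tendsto ε atTop (𝓝 0)) :
    Tendsto (fun n => vEpsOn (f n) (D n) (ε n)) atTop (𝓝 v) := by
  have hsum : Tendsto (fun n => vOn (f n) (D n) + ε n) atTop (𝓝 (v + (0 : ℝ))) :=
    (EReal.continuousAt_add (Or.inr (by simp)) (Or.inl hv_bot)).tendsto.comp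
      (hv.prodMk_nhds (EReal.tendsto_coe.2 hε))
  rw [EReal.coe_zero, add_zero] at hsum
  refine hsum.congr' ?_
  filter_upwards [hv.eventually_ne hv_bot] with n hn
  exact (vEpsOn_of_ne_bot hn _).symm

end ExtendedValues

section OuterLimit

variable {X : Type*} [MetricSpace X] {S : ℕ → Set X} {x : X}

theorem mem_outerLim_of_tendsto {φ : ℕ → ℕ} (hφ : Tendsto φ atTop atTop) {y : ℕ → X}
    (hyS : ∀ᶠ j in atTop, y j ∈ S (φ j)) (hy : Tendsto y atTop (𝓝 x)) : x ∈ outerLim S := by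
  have hdist : Tendsto (fun j => Metric.infEDist x (S (φ j))) atTop (𝓝 0) := by
    refine tendsto_of_tendsto_of_tendsto_of_le_of_le' tendsto_const_nhds
      (tendsto_iff_edist_tendsto_0.1 hy) (Eventually.of_forall fun _ => zero_le) ?_
    filter_upwards [hyS] with j hj
    exact (Metric.infEDist_le_edist_of_mem hj).trans_eq (edist_comm _ _)
  refine le_antisymm ?_ zero_le
  calc atTop.liminf (fun n => Metric.infEDist x (S n))
      ≤ (map φ atTop).liminf (fun n => Metric.infEDist x (S n)) := liminf_le_liminf_of_le hφ
    _ = 0 := by rw [← liminf_comp]; exact hdist.liminf_eq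

theorem exists_tendsto_of_mem_outerLim (hx : x ∈ outerLim S) :
    ∃ φ : ℕ → ℕ, StrictMono φ ∧ ∃ y : ℕ → X, (∀ j, y j ∈ S (φ j)) ∧ Tendsto y atTop (𝓝 x) := by
  have hfreq : ∀ j : ℕ, ∃ᶠ n in atTop, Metric.infEDist x (S n) < (j : ENNReal)⁻¹ := fun j =>
    frequently_lt_of_liminf_lt (h := hx.symm ▸ ENNReal.inv_pos.2 (ENNReal.natCast_ne_top j))
  obtain ⟨φ, hφ, hφS⟩ := extraction_forall_of_frequently hfreq
  choose y hyS hyx using fun j => Metric.infEDist_lt_iff.1 (hφS j)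
  refine ⟨φ, hφ, y, hyS, tendsto_iff_edist_tendsto_0.2 ?_⟩
  refine tendsto_of_tendsto_of_tendsto_of_le_of_le tendsto_const_nhds
    ENNReal.tendsto_inv_nat_nhds_zero (fun _ => zero_le) fun j => ?_
  exact (edist_comm (y j) x).trans_le (hyx j).le

end OuterLimit

section Approximation

variable {X : Type*} [MetricSpace X] {In : ℕ → Set X} {gn : ℕ → X → EReal} {g : X → EReal}

theorem ContConv.tendsto_comp_strictMono (hcc : ContConv gn g) {φ : ℕ → ℕ} (hφ : StrictMono φ)
    {x : ℕ → X} {a : X} (hx : Tendsto x atTop (𝓝 a)) :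
    Tendsto (fun k => gn (φ k) (x k)) atTop (𝓝 (g a)) := by
  set u : ℕ → X := Function.extend φ x fun _ => a
  have hu : Tendsto u atTop (𝓝 a) := fun U hU => by
    obtain ⟨K, hK⟩ := eventually_atTop.1 (hx hU)
    refine eventually_atTop.2 ⟨φ K, fun n hn => ?_⟩
    by_cases hn_range : ∃ k, φ k = n
    · obtain ⟨k, rfl⟩ := hn_range
      simpa only [u, hφ.injective.extend_apply] using hK k (hφ.le_iff_le.1 hn)
    · simpa only [u, Function.extend_apply' _ _ _ hn_range] using mem_of_mem_nhds hU
  simpa only [Function.comp_def, u, hφ.injective.extend_apply] using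
    (hcc a u hu).comp hφ.tendsto_atTop

theorem mem_iInter_of_tendsto (hIc : ∀ n, IsClosed (In n)) (hmono : Antitone In) {φ : ℕ → ℕ}
    (hφ : Tendsto φ atTop atTop) {x : ℕ → X} {a : X} (hxI : ∀ k, x k ∈ In (φ k))
    (hx : Tendsto x atTop (𝓝 a)) : a ∈ ⋂ n, In n :=
  mem_iInter.2 fun n => (hIc n).mem_of_tendsto hx <|
    (hφ.eventually_ge_atTop n).mono fun k hk => hmono hk (hxI k)

theorem EvLevelCompact.exists_tendsto_subseq (hlc : EvLevelCompact gn In) (α : ℝ) {φ : ℕ → ℕ}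
    (hφ : Tendsto φ atTop atTop) {x : ℕ → X}
    (hx : ∀ᶠ k in atTop, x k ∈ In (φ k) ∧ gn (φ k) (x k) ≤ α) :
    ∃ a, ∃ ψ : ℕ → ℕ, StrictMono ψ ∧ Tendsto (x ∘ ψ) atTop (𝓝 a) := by
  obtain ⟨N, hK⟩ := hlc α
  obtain ⟨a, -, ψ, hψ, hxa⟩ := hK.tendsto_subseq' <| Eventually.frequently <| by
    filter_upwards [hx, hφ.eventually_ge_atTop N] with k hk hkN
    exact subset_closure (mem_biUnion hkN hk)
  exact ⟨a, ψ, hψ, hxa⟩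

theorem exists_mem_iInter_tendsto_of_evLevelCompact (hIc : ∀ n, IsClosed (In n))
    (hmono : Antitone In) (hcc : ContConv gn g) (hlc : EvLevelCompact gn In) (α : ℝ)
    {φ : ℕ → ℕ} (hφ : StrictMono φ) {x : ℕ → X}
    (hx : ∀ k, x k ∈ In (φ k) ∧ gn (φ k) (x k) ≤ α) :
    ∃ a ∈ ⋂ n, In n, ∃ ψ : ℕ → ℕ, StrictMono ψ ∧
      Tendsto (fun j => gn (φ (ψ j)) (x (ψ j))) atTop (𝓝 (g a)) := by
  obtain ⟨a, ψ, hψ, hxa⟩ := hlc.exists_tendsto_subseq α hφ.tendsto_atTop (Eventually.of_forall hx)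
  exact ⟨a, mem_iInter_of_tendsto hIc hmono (hφ.comp hψ).tendsto_atTop (fun j => (hx (ψ j)).1) hxa,
    ψ, hψ, hcc.tendsto_comp_strictMono (hφ.comp hψ) hxa⟩

theorem tendsto_vOn_of_contConv (hIc : ∀ n, IsClosed (In n)) (hmono : Antitone In)
    (hcc : ContConv gn g) (hlc : EvLevelCompact gn In) :
    Tendsto (fun n => vOn (gn n) (In n)) atTop (𝓝 (vOn g (⋂ n, In n))) := by
  refine tendsto_of_le_liminf_of_limsup_le ?_ ?_
  · by_contra! hlim
    obtain ⟨β, hβ_lim, hβ_v⟩ := EReal.exists_between_coe_real hlim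
    obtain ⟨φ, hφ, hφβ⟩ := extraction_of_frequently_atTop (frequently_lt_of_liminf_lt (h := hβ_lim))
    choose x hxI hxβ using fun k => exists_mem_lt_of_vOn_lt (hφβ k)
    obtain ⟨a, ha, ψ, -, hga⟩ := exists_mem_iInter_tendsto_of_evLevelCompact hIc hmono hcc hlc β hφ
      fun k => ⟨hxI k, (hxβ k).le⟩
    have hgaβ : g a ≤ β := le_of_tendsto' hga fun j => (hxβ (ψ j)).le
    exact hβ_v.not_ge ((iInf₂_le a ha).trans hgaβ)
  · refine le_iInf₂ fun x hx => ?_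
    calc atTop.limsup (fun n => vOn (gn n) (In n))
        ≤ atTop.limsup (fun n => gn n x) :=
          limsup_le_limsup (Eventually.of_forall fun n => iInf₂_le x (mem_iInter.1 hx n))
      _ = g x := (hcc x (fun _ => x) tendsto_const_nhds).limsup_eq

theorem vOn_iInter_ne_bot (hIc : ∀ n, IsClosed (In n)) (hmono : Antitone In)
    (hcc : ContConv gn g) (hlc : EvLevelCompact gn In) (hg_noBot : ∀ x, g x ≠ ⊥) :
    vOn g (⋂ n, In n) ≠ ⊥ := by
  intro hv
  have hbot := tendsto_vOn_of_contConv hIc hmono hcc hlc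
  rw [hv, EReal.tendsto_nhds_bot_iff_real] at hbot
  obtain ⟨φ, hφ, hφk⟩ := extraction_forall_of_eventually fun k : ℕ => hbot (-k)
  choose x hxI hxk using fun k => exists_mem_lt_of_vOn_lt (hφk k)
  have hx_bot : Tendsto (fun k => gn (φ k) (x k)) atTop (𝓝 ⊥) := by
    refine EReal.tendsto_nhds_bot_iff_real.2 fun r => ?_
    filter_upwards [eventually_gt_atTop ⌈-r⌉₊] with k hk
    refine (hxk k).trans (EReal.coe_lt_coe_iff.2 ?_)
    linarith [Nat.lt_of_ceil_lt hk]
  obtain ⟨a, -, ψ, hψ, hga⟩ := exists_mem_iInter_tendsto_of_evLevelCompact hIc hmono hcc hlc 0 hφ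
    fun k => ⟨hxI k, (hxk k).le.trans (EReal.coe_le_coe_iff.2 (by simp))⟩
  exact hg_noBot a (tendsto_nhds_unique hga (hx_bot.comp hψ.tendsto_atTop))

end Approximation

section Argmin

variable {X : Type*} [MetricSpace X] {In : ℕ → Set X} {gn : ℕ → X → EReal} {g : X → EReal}
  {ε : ℕ → ℝ}

theorem outerLim_argminOn_nonempty {v : EReal} (hlc : EvLevelCompact gn In)
    (hv : Tendsto (fun n => vOn (gn n) (In n)) atTop (𝓝 v)) (hv_bot : v ≠ ⊥) (hv_top : v ≠ ⊤)
    (hεpos : ∀ n, 0 < ε n) (hε0 : Tendsto ε atTop (𝓝 0)) :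
    (outerLim fun n => argminOn (gn n) (In n) (ε n)).Nonempty := by
  obtain ⟨α, hvα⟩ : ∃ α : ℝ, v < α := ⟨v.toReal + 1, by
    rw [← EReal.coe_toReal hv_top hv_bot]; exact EReal.coe_lt_coe_iff.2 (lt_add_one _)⟩
  have hsel : ∀ᶠ n in atTop, ∃ y, y ∈ argminOn (gn n) (In n) (ε n) ∧ gn n y ≤ α := by
    filter_upwards [hv.eventually_ne hv_bot, hv.eventually_ne hv_top,
      (tendsto_vEpsOn hv hv_bot hε0).eventually_lt_const hvα] with n hn_bot hn_top hnα
    obtain ⟨y, hy⟩ := argminOn_nonempty hn_bot hn_top (hεpos n)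
    exact ⟨y, hy, hy.2.trans hnα.le⟩
  obtain ⟨y, hy⟩ := hsel.choice
  obtain ⟨a, ψ, hψ, hya⟩ :=
    hlc.exists_tendsto_subseq α tendsto_id <| hy.mono fun n hn => ⟨hn.1.1, hn.2⟩
  exact ⟨a, mem_outerLim_of_tendsto hψ.tendsto_atTop
    (hψ.tendsto_atTop.eventually (hy.mono fun n hn => hn.1)) hya⟩

theorem outerLim_argminOn_subset (hIc : ∀ n, IsClosed (In n)) (hmono : Antitone In)
    (hcc : ContConv gn g)
    (hv : Tendsto (fun n => vOn (gn n) (In n)) atTop (𝓝 (vOn g (⋂ n, In n))))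
    (hv_bot : vOn g (⋂ n, In n) ≠ ⊥) (hε0 : Tendsto ε atTop (𝓝 0)) :
    (outerLim fun n => argminOn (gn n) (In n) (ε n)) ⊆ argminOn g (⋂ n, In n) 0 := by
  intro a ha
  obtain ⟨φ, hφ, y, hyA, hya⟩ := exists_tendsto_of_mem_outerLim ha
  rw [argminOn_zero_of_ne_bot hv_bot]
  refine ⟨mem_iInter_of_tendsto hIc hmono hφ.tendsto_atTop (fun j => (hyA j).1) hya, ?_⟩
  exact le_of_tendsto_of_tendsto' (hcc.tendsto_comp_strictMono hφ hya)
    ((tendsto_vEpsOn hv hv_bot hε0).comp hφ.tendsto_atTop) fun j => (hyA j).2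

end Argmin

theorem infinite_programming_argmin_convergence_general {X : Type*} [MetricSpace X] [PolishSpace X]
    {S : Type*} [TopologicalSpace S] [MeasurableSpace S]
    (hopen_meas : ∀ U : Set S, IsOpen U → MeasurableSet U)
    (μ : Measure S) [IsFiniteMeasure μ]
    (hμ_pos : ∀ U : Set S, IsOpen U → U.Nonempty → 0 < μ U)
    (M : S → Set X) (hM_osc : IsClosed {p : S × X | p.2 ∈ M p.1})
    (hM_closed : ∀ s, IsClosed (M s))
    (T : S → S) (hT : Ergodic T ((μ Set.univ)⁻¹ • μ))
    (g : X → EReal) (gn : ℕ → X → EReal)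
    (hg_noBot : ∀ x, g x ≠ ⊥)
    (hcc : ContConv gn g)
    (hfeas : ∃ x ∈ ⋂ s, M s, g x < ⊤)
    (hlc : ∀ᵐ s ∂μ, EvLevelCompact gn (fun n => ⋂ k ∈ Finset.Icc 1 n, M (T^[k] s)))
    (εn : ℕ → S → ℝ) (hεn_pos : ∀ n s, 0 < εn n s)
    (hεn_to0 : ∀ᵐ s ∂μ, Tendsto (fun n => εn n s) atTop (𝓝 0)) :
    ∀ᵐ s ∂μ,
      (outerLim (fun n =>
          argminOn (gn n) (⋂ k ∈ Finset.Icc 1 n, M (T^[k] s)) (εn n s))).Nonempty ∧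
      outerLim (fun n =>
          argminOn (gn n) (⋂ k ∈ Finset.Icc 1 n, M (T^[k] s)) (εn n s)) ⊆
        argminOn g (⋂ s, M s) 0 := by
  have hc : (μ univ)⁻¹ ≠ 0 := ENNReal.inv_ne_zero.2 (measure_ne_top μ univ)
  have horbit : ∀ᵐ s ∂μ, ⋂ k, M (T^[k + 1] s) = ⋂ s, M s :=
    (Measure.ae_ennreal_smul_measure_iff hc).1 <| hT.ae_iInter_iterate_eq hopen_meas
      (fun U hU hne => mul_ne_zero hc (hμ_pos U hU hne).ne') hM_osc
  filter_upwards [horbit, hlc, hεn_to0] with s hs hlcs hεs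
  set In : ℕ → Set X := fun n => ⋂ k ∈ Finset.Icc 1 n, M (T^[k] s)
  have hIc (n : ℕ) : IsClosed (In n) := isClosed_biInter fun k _ => hM_closed _
  have hmono : Antitone In := fun m n hmn =>
    biInter_mono (fun k hk => Finset.Icc_subset_Icc_right hmn hk) fun _ _ => subset_rfl
  have hMa : ⋂ n, In n = ⋂ s, M s := (iInter_biInter_Icc_one _).trans hs
  rw [← hMa] at hfeas ⊢
  obtain ⟨x, hx, hgx⟩ := hfeas
  have hv := tendsto_vOn_of_contConv hIc hmono hcc hlcs
  have hv_bot := vOn_iInter_ne_bot hIc hmono hcc hlcs hg_noBot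
  have hv_top : vOn g (⋂ n, In n) ≠ ⊤ := ((iInf₂_le x hx).trans_lt hgx).ne
  exact ⟨outerLim_argminOn_nonempty hlcs hv hv_bot hv_top (hεn_pos · s) hεs,
    outerLim_argminOn_subset hIc hmono hcc hv hv_bot hεs⟩

/-- ergodic approach to infinite programming; argmin convergence. Under the
assumptions of the value-convergence result, for measurable `ε n > 0` with `ε n s → 0`
a.e., for `μ`-a.e. `s` the outer limit of the `ε n s`-argmins of `g n` on `I n s` is
nonempty and contained in the argmin of `g` on `M_a`. -/
theorem infinite_programming_argmin_convergence {X : Type*} [MetricSpace X] [PolishSpace X]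
    {S : Type*} [TopologicalSpace S] [MeasurableSpace S]
    (hopen_meas : ∀ U : Set S, IsOpen U → MeasurableSet U)
    (μ : Measure S) [IsFiniteMeasure μ] [μ.IsComplete]
    (hμ_pos : ∀ U : Set S, IsOpen U → U.Nonempty → 0 < μ U)
    (M : S → Set X) (hM_osc : IsClosed {p : S × X | p.2 ∈ M p.1})
    (hM_closed : ∀ s, IsClosed (M s)) (hM_meas : MeasurableMultifun M)
    (T : S → S) (hT : Ergodic T ((μ Set.univ)⁻¹ • μ))
    (g : X → EReal) (gn : ℕ → X → EReal)
    (hg_noBot : ∀ x, g x ≠ ⊥) (hgn_noBot : ∀ n x, gn n x ≠ ⊥)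
    (hg_lsc : LowerSemicontinuous g) (hgn_lsc : ∀ n, LowerSemicontinuous (gn n))
    (hcc : ContConv gn g)
    (hfeas : ∃ x ∈ ⋂ s, M s, g x < ⊤)
    (hlc : ∀ᵐ s ∂μ, EvLevelCompact gn (fun n => ⋂ k ∈ Finset.Icc 1 n, M (T^[k] s)))
    (εn : ℕ → S → ℝ) (hεn_meas : ∀ n, Measurable (εn n)) (hεn_pos : ∀ n s, 0 < εn n s)
    (hεn_to0 : ∀ᵐ s ∂μ, Tendsto (fun n => εn n s) atTop (𝓝 0)) :
    ∀ᵐ s ∂μ,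
      (outerLim (fun n =>
          argminOn (gn n) (⋂ k ∈ Finset.Icc 1 n, M (T^[k] s)) (εn n s))).Nonempty ∧
      outerLim (fun n =>
          argminOn (gn n) (⋂ k ∈ Finset.Icc 1 n, M (T^[k] s)) (εn n s)) ⊆
        argminOn g (⋂ s, M s) 0 :=
  infinite_programming_argmin_convergence_general hopen_meas μ hμ_pos M hM_osc hM_closed T hT g gn
    hg_noBot hcc hfeas hlc εn hεn_pos hεn_to0
end
end

section
/- Let S be a topological space, 𝒜 a σ-algebra on S containing all open subsets of S, and μ : 𝒜 → [0, ∞) a finite, strictly positive measure such that (S, 𝒜, μ) is complete. Let g : ℝ^d → ℝ and φ : S × ℝ^d → ℝ be continuous functions, C ⊆ ℝ^d a bounded closed set, and T : S → S an ergodic measure-preserving transformation with respect to ℙ := μ/μ(S). Let (e_n) be a sequence of mollifiers on ℝ^d whose supports shrink to {0}, and let g_n(x) := ∫_{ℝ^d} e_n(x − z) g(z) dz be the mollifications of g. Consider the semi-infinite problem: minimize g(x) subject to x ∈ C and φ(s, x) ≤ 0 for all s ∈ S, and assume it is feasible (there exists x ∈ C with φ(s, x) ≤ 0 for all s ∈ S).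 For s ∈ S, let x_n(s) be a measurable selection of minimizers of the problem: minimize g_n(x) subject to x ∈ C and φ(T^i(s), x) ≤ 0 for i = 1, …, n. Then for μ-a.e. s ∈ S: (a) g_n(x_n(s)) converges to the optimal value of the semi-infinite problem, and (b) every cluster point of the sequence (x_n(s))_{n∈ℕ} is a minimizer of the semi-infinite problem. -/
/-!
An infeasible point `x₀`, violating `φ s₀ x₀ ≤ 0`, violates `φ s · ≤ 0` on a whole product of
open sets `W × V` around `(s₀, x₀)`. Taking `V` from a countable basis, countably many such `W`
suffice, and since `μ` charges every nonempty open set, ergodicity makes almost every orbit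
`T^[i] s` enter all of them. Hence almost surely no infeasible point is a cluster point of the
sampled minimizers `x n s`, which live in the compact set `C`. The mollifications `g n` converge
to `g` continuously, so along a subsequence with `x n s → x₀` we get
`g x₀ = lim g n (x n s) ≤ lim g n (xopt) = g xopt` for a minimizer `xopt` of `g` on the feasible
set, which is feasible for every sampled problem; as `x₀` is feasible, equality holds.
-/

open Filter Topology MeasureTheory Set

noncomputable section

section Ergodic

variable {S : Type*} [MeasurableSpace S] {μ : Measure S} {T : S → S}

theorem Ergodic.of_inv_measure_univ_smul [IsFiniteMeasure μ]
    (hT : Ergodic T ((μ univ)⁻¹ • μ)) : Ergodic T μ := by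
  rcases eq_zero_or_neZero μ with rfl | _
  · exact .zero_measure hT.measurable
  · have h := hT.smul_measure (μ univ)
    rwa [smul_smul, ENNReal.mul_inv_cancel (NeZero.ne (μ univ))
      (measure_ne_top μ univ), one_smul] at h

theorem Ergodic.ae_exists_iterate_mem_s19 [IsFiniteMeasure μ] (hT : Ergodic T μ) {U : Set S}
    (hU : MeasurableSet U) (hU₀ : μ U ≠ 0) : ∀ᵐ s ∂μ, ∃ i ≥ 1, T^[i] s ∈ U := by
  set B := ⋃ i, T^[i + 1] ⁻¹' U
  have hB : MeasurableSet B := .iUnion fun i => hT.measurable.iterate (i + 1) hU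
  have hB_inv : T ⁻¹' B ⊆ B := by
    simp only [B, preimage_iUnion, ← preimage_comp]
    exact iUnion_subset fun i => subset_iUnion (fun j => T^[j + 1] ⁻¹' U) (i + 1)
  rcases hT.ae_empty_or_univ_of_preimage_ae_le' hB.nullMeasurableSet hB_inv.eventuallyLE
      (measure_ne_top μ B) with hB₀ | hB₁
  · refine absurd ?_ hU₀
    rw [← hT.measure_preimage hU.nullMeasurableSet]
    exact measure_mono_null (subset_iUnion (fun i => T^[i + 1] ⁻¹' U) 0) (ae_eq_empty.mp hB₀)
  · filter_upwards [eventuallyEq_univ.mp hB₁] with s hs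
    obtain ⟨i, hi⟩ := mem_iUnion.mp hs
    exact ⟨i + 1, by omega, hi⟩

end Ergodic

section SampledConstraints

variable {S X : Type*} [TopologicalSpace S] [TopologicalSpace X] {φ : S → X → ℝ}

theorem exists_mem_countableBasis_subset_pos [SecondCountableTopology X]
    (hφ : Continuous fun p : S × X => φ p.1 p.2) {s₀ : S} {x₀ : X} (h : 0 < φ s₀ x₀) :
    ∃ b ∈ TopologicalSpace.countableBasis X, x₀ ∈ b ∧
      s₀ ∈ interior {s | ∀ y ∈ b, 0 < φ s y} := by
  obtain ⟨u, v, hu, hv, hs₀u, hx₀v, huv⟩ :=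
    isOpen_prod_iff.mp (isOpen_lt continuous_const hφ) s₀ x₀ h
  obtain ⟨b, hb, hx₀b, hbv⟩ :=
    (TopologicalSpace.isBasis_countableBasis X).exists_subset_of_mem_open hx₀v hv
  exact ⟨b, hb, hx₀b,
    mem_interior.mpr ⟨u, fun s hs y hy => huv (mk_mem_prod hs (hbv hy)), hu, hs₀u⟩⟩

variable [MeasurableSpace S] [OpensMeasurableSpace S] [SecondCountableTopology X]
  {μ : Measure S} [IsFiniteMeasure μ] {T : S → S}

theorem Ergodic.ae_exists_nhds_iterate_pos (hT : Ergodic T μ)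
    (hμ : ∀ U : Set S, IsOpen U → U.Nonempty → 0 < μ U)
    (hφ : Continuous fun p : S × X => φ p.1 p.2) :
    ∀ᵐ s ∂μ, ∀ s₀ x₀, 0 < φ s₀ x₀ → ∃ V ∈ 𝓝 x₀, ∃ i ≥ 1, ∀ y ∈ V, 0 < φ (T^[i] s) y := by
  have hvisit : ∀ᵐ s ∂μ, ∀ b ∈ TopologicalSpace.countableBasis X,
      (interior {s | ∀ y ∈ b, 0 < φ s y}).Nonempty →
        ∃ i ≥ 1, T^[i] s ∈ interior {s | ∀ y ∈ b, 0 < φ s y} := by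
    refine (ae_ball_iff (TopologicalSpace.countable_countableBasis X)).mpr fun b _ => ?_
    refine eventually_imp_distrib_left.mpr fun hne => ?_
    exact hT.ae_exists_iterate_mem_s19 isOpen_interior.measurableSet (hμ _ isOpen_interior hne).ne'
  filter_upwards [hvisit] with s hs s₀ x₀ h
  obtain ⟨b, hb, hx₀b, hs₀b⟩ := exists_mem_countableBasis_subset_pos hφ h
  obtain ⟨i, hi, hTi⟩ := hs b hb ⟨s₀, hs₀b⟩
  exact ⟨b, (TopologicalSpace.isOpen_of_mem_countableBasis hb).mem_nhds hx₀b, i, hi,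
    interior_subset hTi⟩

theorem Ergodic.ae_mapClusterPt_feasible (hT : Ergodic T μ)
    (hμ : ∀ U : Set S, IsOpen U → U.Nonempty → 0 < μ U)
    (hφ : Continuous fun p : S × X => φ p.1 p.2) :
    ∀ᵐ s ∂μ, ∀ u : ℕ → X, (∀ n, ∀ i ∈ Finset.Icc 1 n, φ (T^[i] s) (u n) ≤ 0) →
      ∀ x₀, MapClusterPt x₀ atTop u → ∀ s₀, φ s₀ x₀ ≤ 0 := by
  filter_upwards [hT.ae_exists_nhds_iterate_pos hμ hφ] with s hs u hu x₀ hx₀ s₀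
  by_contra! h
  obtain ⟨V, hV, i, hi, hpos⟩ := hs s₀ x₀ h
  obtain ⟨n, hnV, hin⟩ := ((hx₀.frequently hV).and_eventually (eventually_ge_atTop i)).exists
  exact (hpos _ hnV).not_ge (hu n i (Finset.mem_Icc.mpr ⟨hi, hin⟩))

end SampledConstraints

section Mollification

variable {G : Type*} [NormedAddCommGroup G]

theorem tendsto_support_smallSets_of_norm_le {e : ℕ → G → ℝ} {ρ : ℕ → ℝ}
    (hρ : Tendsto ρ atTop (𝓝 0)) (he : ∀ n, {z | 0 < e n z} ⊆ {z | ‖z‖ ≤ ρ n})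
    (he_nonneg : ∀ n z, 0 ≤ e n z) :
    Tendsto (fun n => Function.support (e n)) atTop (𝓝 0).smallSets := by
  refine ((tendsto_closedBall_smallSets 0).comp hρ).smallSets_mono
    (Eventually.of_forall fun n z hz => ?_)
  exact mem_closedBall_zero_iff.mpr (he n ((he_nonneg n z).lt_of_ne' hz))

variable [MeasurableSpace G] [BorelSpace G] [SecondCountableTopology G] {μ : Measure G}
  [μ.IsAddLeftInvariant] [μ.IsNegInvariant] [SFinite μ]

theorem tendsto_integral_mul_sub_prod_nhds {e : ℕ → G → ℝ} {g : G → ℝ} (hg : Continuous g)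
    (he_nonneg : ∀ n z, 0 ≤ e n z) (he_int : ∀ n, ∫ z, e n z ∂μ = 1)
    (he_supp : Tendsto (fun n => Function.support (e n)) atTop (𝓝 0).smallSets) (x₀ : G) :
    Tendsto (fun p : ℕ × G => ∫ z, e p.1 (p.2 - z) * g z ∂μ) (atTop ×ˢ 𝓝 x₀) (𝓝 (g x₀)) := by
  have := convolution_tendsto_right (μ := μ) (l := atTop ×ˢ 𝓝 x₀) (g := fun _ => g)
    (φ := fun p => e p.1) (k := Prod.snd) (.of_forall fun p => he_nonneg p.1)
    (.of_forall fun p => he_int p.1)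
    (he_supp.comp tendsto_fst) (.of_forall fun _ => hg.aestronglyMeasurable)
    ((hg.tendsto x₀).comp tendsto_snd) tendsto_snd
  simpa only [convolution_lsmul_swap, smul_eq_mul] using this

end Mollification

section Minimizers

variable {X : Type*} [TopologicalSpace X] {G : ℕ → X → ℝ} {g : X → ℝ} {F : Set X} {u : ℕ → X}
  {xopt : X}

theorem tendsto_apply_subseq_of_isMinOn
    (hG : ∀ x₀, Tendsto (fun p : ℕ × X => G p.1 p.2) (atTop ×ˢ 𝓝 x₀) (𝓝 (g x₀)))
    (hxopt : IsMinOn g F xopt) (hle : ∀ n, G n (u n) ≤ G n xopt) {ψ : ℕ → ℕ}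
    (hψ : Tendsto ψ atTop atTop) {x₀ : X} (hx₀ : x₀ ∈ F) (hu : Tendsto (u ∘ ψ) atTop (𝓝 x₀)) :
    g x₀ = g xopt ∧ Tendsto (fun k => G (ψ k) (u (ψ k))) atTop (𝓝 (g xopt)) := by
  have hlim : Tendsto (fun k => G (ψ k) (u (ψ k))) atTop (𝓝 (g x₀)) :=
    (hG x₀).comp (hψ.prodMk hu)
  have hlim_opt : Tendsto (fun k => G (ψ k) xopt) atTop (𝓝 (g xopt)) :=
    (hG xopt).comp (hψ.prodMk tendsto_const_nhds)
  have heq : g x₀ = g xopt :=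
    le_antisymm (le_of_tendsto_of_tendsto' hlim hlim_opt fun k => hle (ψ k)) (hxopt hx₀)
  exact ⟨heq, heq ▸ hlim⟩

theorem tendsto_apply_of_isMinOn [FirstCountableTopology X] {C : Set X} (hC : IsCompact C)
    (huC : ∀ n, u n ∈ C) (hcl : ∀ x₀, MapClusterPt x₀ atTop u → x₀ ∈ F)
    (hG : ∀ x₀, Tendsto (fun p : ℕ × X => G p.1 p.2) (atTop ×ˢ 𝓝 x₀) (𝓝 (g x₀)))
    (hxopt : IsMinOn g F xopt) (hle : ∀ n, G n (u n) ≤ G n xopt) :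
    Tendsto (fun n => G n (u n)) atTop (𝓝 (g xopt)) ∧
      ∀ x₀, MapClusterPt x₀ atTop u → x₀ ∈ F ∧ IsMinOn g F x₀ := by
  refine ⟨tendsto_of_subseq_tendsto fun ns hns => ?_, fun x₀ hx₀ => ?_⟩
  · obtain ⟨x₀, -, ms, hms, hlim⟩ := hC.tendsto_subseq fun k => huC (ns k)
    have hψ : Tendsto (ns ∘ ms) atTop atTop := hns.comp hms.tendsto_atTop
    have hx₀ : x₀ ∈ F := hcl x₀ (hlim.mapClusterPt.of_comp hψ)
    exact ⟨ms, (tendsto_apply_subseq_of_isMinOn hG hxopt hle hψ hx₀ hlim).2⟩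
  · obtain ⟨ψ, hψ, hlim⟩ := hx₀.tendsto_subseq
    have hx₀F : x₀ ∈ F := hcl x₀ hx₀
    have heq := (tendsto_apply_subseq_of_isMinOn hG hxopt hle hψ.tendsto_atTop hx₀F hlim).1
    exact ⟨hx₀F, isMinOn_iff.mpr fun y hy => heq ▸ hxopt hy⟩

end Minimizers

theorem mollified_semiInfinite_consistency_general {d : ℕ}
    {S : Type*} [TopologicalSpace S] [MeasurableSpace S]
    (hopen_meas : ∀ U : Set S, IsOpen U → MeasurableSet U)
    (μ : Measure S) [IsFiniteMeasure μ]
    (hμ_pos : ∀ U : Set S, IsOpen U → U.Nonempty → 0 < μ U)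
    (g : EuclideanSpace ℝ (Fin d) → ℝ) (hg : Continuous g)
    (φ : S → EuclideanSpace ℝ (Fin d) → ℝ)
    (hφ : Continuous fun p : S × EuclideanSpace ℝ (Fin d) => φ p.1 p.2)
    (C : Set (EuclideanSpace ℝ (Fin d))) (hC_bdd : Bornology.IsBounded C)
    (hC_closed : IsClosed C)
    (T : S → S) (hT : Ergodic T ((μ Set.univ)⁻¹ • μ))
    (e : ℕ → EuclideanSpace ℝ (Fin d) → ℝ)
    (he_nonneg : ∀ n z, 0 ≤ e n z)
    (he_int : ∀ n, ∫ z, e n z = 1)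
    (ρ : ℕ → ℝ) (hρ_to0 : Tendsto ρ atTop (𝓝 0))
    (he_supp : ∀ n, {z | 0 < e n z} ⊆ {z | ‖z‖ ≤ ρ n})
    (hfeas : ∃ x ∈ C, ∀ s, φ s x ≤ 0)
    (x : ℕ → S → EuclideanSpace ℝ (Fin d))
    (hx_min : ∀ᵐ s ∂μ, ∀ n,
      x n s ∈ {z ∈ C | ∀ i ∈ Finset.Icc 1 n, φ (T^[i] s) z ≤ 0} ∧
      ∀ y ∈ {z ∈ C | ∀ i ∈ Finset.Icc 1 n, φ (T^[i] s) z ≤ 0},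
        (∫ z, e n (x n s - z) * g z) ≤ ∫ z, e n (y - z) * g z) :
    ∀ᵐ s ∂μ,
      Tendsto (fun n => ∫ z, e n (x n s - z) * g z) atTop
        (𝓝 (sInf (g '' {z ∈ C | ∀ s' : S, φ s' z ≤ 0}))) ∧
      ∀ x₀, MapClusterPt x₀ atTop (fun n => x n s) →
        x₀ ∈ {z ∈ C | ∀ s' : S, φ s' z ≤ 0} ∧
        ∀ y ∈ {z ∈ C | ∀ s' : S, φ s' z ≤ 0}, g x₀ ≤ g y := by
  have hTμ : Ergodic T μ := hT.of_inv_measure_univ_smul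
  have : OpensMeasurableSpace S := ⟨MeasurableSpace.generateFrom_le hopen_meas⟩
  have hC : IsCompact C := Metric.isCompact_of_isClosed_isBounded hC_closed hC_bdd
  set F := {z ∈ C | ∀ s' : S, φ s' z ≤ 0}
  have hF_closed : IsClosed {z | ∀ s' : S, φ s' z ≤ 0} := by
    rw [ofPred_forall]
    exact isClosed_iInter fun s' => isClosed_le (hφ.comp (.prodMk_right s')) continuous_const
  obtain ⟨xopt, hxoptF, hxopt⟩ := (hC.inter_right hF_closed).exists_isMinOn hfeas hg.continuousOn
  have hval : sInf (g '' F) = g xopt :=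
    IsLeast.csInf_eq ⟨mem_image_of_mem g hxoptF, forall_mem_image.mpr fun _ hy => hxopt hy⟩
  have hG := tendsto_integral_mul_sub_prod_nhds hg he_nonneg he_int
    (tendsto_support_smallSets_of_norm_le hρ_to0 he_supp he_nonneg)
  filter_upwards [hx_min, hTμ.ae_mapClusterPt_feasible hμ_pos hφ] with s hs hs_cl
  have hcl : ∀ x₀, MapClusterPt x₀ atTop (fun n => x n s) → x₀ ∈ F := fun x₀ hx₀ =>
    ⟨hC_closed.mem_of_mapClusterPt hx₀ (.of_forall fun n => (hs n).1.1),
      hs_cl _ (fun n => (hs n).1.2) x₀ hx₀⟩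
  obtain ⟨hconv, hclus⟩ := tendsto_apply_of_isMinOn (G := fun n y => ∫ z, e n (y - z) * g z)
    hC (fun n => (hs n).1.1) hcl hG hxopt fun n => (hs n).2 xopt ⟨hxoptF.1, fun _ _ => hxoptF.2 _⟩
  exact ⟨hval ▸ hconv, fun x₀ hx₀ => (hclus x₀ hx₀).imp_right isMinOn_iff.mp⟩

/-- mollified ergodic approach to semi-infinite programming. With `g, φ`
continuous, `C` bounded and closed, `T` ergodic measure-preserving w.r.t. `ℙ := μ/μ(S)`,
mollifications `g n x = ∫ e n (x - z) g z dz` whose kernels have supports shrinking to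
`{0}`, and measurable selections `x n s` of minimizers of `g n` over
`{x ∈ C : φ (T^i s) x ≤ 0, i = 1, …, n}`, for `μ`-a.e. `s`:
(a) `g n (x n s)` converges to the optimal value of the semi-infinite problem, and
(b) every cluster point of `(x n s)` is a minimizer of the semi-infinite problem. -/
theorem mollified_semiInfinite_consistency {d : ℕ}
    {S : Type*} [TopologicalSpace S] [MeasurableSpace S]
    (hopen_meas : ∀ U : Set S, IsOpen U → MeasurableSet U)
    (μ : Measure S) [IsFiniteMeasure μ] [μ.IsComplete]
    (hμ_pos : ∀ U : Set S, IsOpen U → U.Nonempty → 0 < μ U)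
    (g : EuclideanSpace ℝ (Fin d) → ℝ) (hg : Continuous g)
    (φ : S → EuclideanSpace ℝ (Fin d) → ℝ)
    (hφ : Continuous fun p : S × EuclideanSpace ℝ (Fin d) => φ p.1 p.2)
    (C : Set (EuclideanSpace ℝ (Fin d))) (hC_bdd : Bornology.IsBounded C)
    (hC_closed : IsClosed C)
    (T : S → S) (hT : Ergodic T ((μ Set.univ)⁻¹ • μ))
    (e : ℕ → EuclideanSpace ℝ (Fin d) → ℝ)
    (he_meas : ∀ n, Measurable (e n)) (he_nonneg : ∀ n z, 0 ≤ e n z)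
    (he_int : ∀ n, ∫ z, e n z = 1)
    (he_antitone : ∀ n, {z | 0 < e (n + 1) z} ⊆ {z | 0 < e n z})
    (ρ : ℕ → ℝ) (hρ_to0 : Tendsto ρ atTop (𝓝 0))
    (he_supp : ∀ n, {z | 0 < e n z} ⊆ {z | ‖z‖ ≤ ρ n})
    (hfeas : ∃ x ∈ C, ∀ s, φ s x ≤ 0)
    (x : ℕ → S → EuclideanSpace ℝ (Fin d)) (hx_meas : ∀ n, Measurable (x n))
    (hx_min : ∀ᵐ s ∂μ, ∀ n,
      x n s ∈ {z ∈ C | ∀ i ∈ Finset.Icc 1 n, φ (T^[i] s) z ≤ 0} ∧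
      ∀ y ∈ {z ∈ C | ∀ i ∈ Finset.Icc 1 n, φ (T^[i] s) z ≤ 0},
        (∫ z, e n (x n s - z) * g z) ≤ ∫ z, e n (y - z) * g z) :
    ∀ᵐ s ∂μ,
      Tendsto (fun n => ∫ z, e n (x n s - z) * g z) atTop
        (𝓝 (sInf (g '' {z ∈ C | ∀ s' : S, φ s' z ≤ 0}))) ∧
      ∀ x₀, MapClusterPt x₀ atTop (fun n => x n s) →
        x₀ ∈ {z ∈ C | ∀ s' : S, φ s' z ≤ 0} ∧
        ∀ y ∈ {z ∈ C | ∀ s' : S, φ s' z ≤ 0}, g x₀ ≤ g y :=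
  mollified_semiInfinite_consistency_general hopen_meas μ hμ_pos g hg φ hφ C hC_bdd hC_closed T hT e
    he_nonneg he_int ρ hρ_to0 he_supp hfeas x hx_min
end
end
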